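/- arXiv:1401.8054 — 10 statements merged into one kernel-verified Lean document; each statement's English description precedes it below -/
import Mathlib

section
/- Let κ₋(s) = max{-κ(s),0} and p₋ solve p₋'' - κ₋ p₋ = 0 with p₋(0)=0, p₋'(0)=1. Then for λ > 0, ρ ≤ p₋(ρ) ≤ exp(∫₀^λ s κ₋(s) ds) · ρ for all ρ ∈ [0,λ]. -/
/-!
Since `p' (0) = 1`, the first point where `p'` could vanish would have `p > 0` before it, hence
`p'' = κ₋ p ≥ 0` there, so `p' ≥ 1` up to that point: a contradiction. Thus `p' ≥ 1` and `p ≥ ρ`,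
and `p` is convex, so `p ρ ≤ ρ p' ρ`. This turns the equation into `p'' ≤ ρ κ₋(ρ) p'`, and
Grönwall's argument (`p' · exp (-∫₀^ρ s κ₋ s ds)` is antitone) gives `p' ρ ≤ exp (∫₀^ρ s κ₋ s ds)`.
-/

open Set Real MeasureTheory

lemma exists_pos_first_nonpos {f : ℝ → ℝ} (hf : Continuous f) (h0 : 0 < f 0)
    (hnonpos : ∃ t ≥ 0, f t ≤ 0) : ∃ c > 0, f c ≤ 0 ∧ ∀ t ∈ Ico 0 c, 0 < f t := by
  let Z := {t | 0 ≤ t ∧ f t ≤ 0}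
  have hZ : IsClosed Z :=
    (isClosed_le continuous_const continuous_id).inter (isClosed_le hf continuous_const)
  have hbdd : BddBelow Z := ⟨0, fun _ ht => ht.1⟩
  obtain ⟨hc, hfc⟩ : sInf Z ∈ Z := hZ.csInf_mem hnonpos hbdd
  refine ⟨sInf Z, hc.lt_of_ne ?_, hfc, fun t ht => ?_⟩
  · rintro hc0
    rw [← hc0] at hfc
    linarith
  · by_contra! hft
    exact (csInf_le hbdd ⟨ht.1, hft⟩).not_gt ht.2

/-- For constant `q = -k` this is the generalized sine `sn_k` of comparison geometry. -/
structure IsGeneralizedSine (q p : ℝ → ℝ) : Prop where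
  differentiable : Differentiable ℝ p
  differentiable_deriv : Differentiable ℝ (deriv p)
  deriv_deriv : ∀ t > 0, deriv (deriv p) t = q t * p t
  map_zero : p 0 = 0
  deriv_zero : deriv p 0 = 1

namespace IsGeneralizedSine

variable {q p : ℝ → ℝ}

theorem one_le_deriv_of_forall_Ico (h : IsGeneralizedSine q p) (hq : 0 ≤ q) {c : ℝ}
    (hc : 0 ≤ c) (hpos : ∀ t ∈ Ico 0 c, 0 < deriv p t) : 1 ≤ deriv p c := by
  have hp_mono : StrictMonoOn p (Icc 0 c) :=
    strictMonoOn_of_deriv_pos (convex_Icc 0 c) h.differentiable.continuous.continuousOn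
      fun t ht => by
        rw [interior_Icc] at ht
        exact hpos t (Ioo_subset_Ico_self ht)
  have hp_pos : ∀ t ∈ Ioo 0 c, 0 < p t := fun t ht =>
    h.map_zero ▸ hp_mono (left_mem_Icc.2 hc) (Ioo_subset_Icc_self ht) ht.1
  have hp'_mono : MonotoneOn (deriv p) (Icc 0 c) :=
    monotoneOn_of_deriv_nonneg (convex_Icc 0 c) h.differentiable_deriv.continuous.continuousOn
      h.differentiable_deriv.differentiableOn fun t ht => by
        rw [interior_Icc] at ht
        rw [h.deriv_deriv t ht.1]
        exact mul_nonneg (hq t) (hp_pos t ht).le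
  simpa [h.deriv_zero] using hp'_mono (left_mem_Icc.2 hc) (right_mem_Icc.2 hc) hc

theorem one_le_deriv (h : IsGeneralizedSine q p) (hq : 0 ≤ q) {t : ℝ} (ht : 0 ≤ t) :
    1 ≤ deriv p t := by
  have hpos : ∀ s ≥ 0, 0 < deriv p s := by
    by_contra! hnonpos
    obtain ⟨c, hc, hc_nonpos, hbefore⟩ := exists_pos_first_nonpos
      h.differentiable_deriv.continuous (h.deriv_zero ▸ one_pos) hnonpos
    linarith [h.one_le_deriv_of_forall_Ico hq hc.le hbefore]
  exact h.one_le_deriv_of_forall_Ico hq ht fun s hs => hpos s hs.1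

theorem le_self (h : IsGeneralizedSine q p) (hq : 0 ≤ q) {t : ℝ} (ht : 0 ≤ t) : t ≤ p t := by
  have := (convex_Ici (0 : ℝ)).mul_sub_le_image_sub_of_le_deriv
    h.differentiable.continuous.continuousOn h.differentiable.differentiableOn
    (fun s hs => h.one_le_deriv hq (interior_subset hs : s ∈ Ici 0))
    0 self_mem_Ici t ht ht
  simpa [h.map_zero] using this

theorem le_mul_deriv (h : IsGeneralizedSine q p) (hq : 0 ≤ q) {t : ℝ} (ht : 0 ≤ t) :
    p t ≤ t * deriv p t := by
  have hmono : MonotoneOn (fun s => s * deriv p s - p s) (Ici 0) := by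
    refine monotoneOn_of_hasDerivWithinAt_nonneg (convex_Ici 0)
      ((continuous_id.mul h.differentiable_deriv.continuous).sub
        h.differentiable.continuous).continuousOn
      (fun s _ => (((hasDerivAt_id s).mul (h.differentiable_deriv s).hasDerivAt).sub
        (h.differentiable s).hasDerivAt).hasDerivWithinAt) fun s hs => ?_
    rw [interior_Ici] at hs
    have hs' : (0 : ℝ) < s := hs
    rw [h.deriv_deriv s hs']
    have := mul_nonneg hs'.le (mul_nonneg (hq s) (hs'.le.trans (h.le_self hq hs'.le)))
    simp only [id_eq]
    linarith
  simpa [h.map_zero] using hmono self_mem_Ici ht ht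

theorem deriv_le_exp_integral (h : IsGeneralizedSine q p) (hq : 0 ≤ q) (hqc : Continuous q)
    {t : ℝ} (ht : 0 ≤ t) : deriv p t ≤ exp (∫ s in (0 : ℝ)..t, s * q s) := by
  let M : ℝ → ℝ := fun t => ∫ s in (0 : ℝ)..t, s * q s
  have hM : ∀ s, HasDerivAt M (s * q s) s := fun s =>
    ((continuous_id.mul hqc).integral_hasStrictDerivAt 0 s).hasDerivAt
  have hanti : AntitoneOn (fun s => deriv p s * exp (-M s)) (Ici 0) := by
    refine antitoneOn_of_hasDerivWithinAt_nonpos (convex_Ici 0)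
      (h.differentiable_deriv.continuous.mul
        (continuous_iff_continuousAt.2 fun s => (hM s).continuousAt).neg.rexp).continuousOn
      (fun s _ => ((h.differentiable_deriv s).hasDerivAt.mul
        (hM s).neg.exp).hasDerivWithinAt) fun s hs => ?_
    rw [interior_Ici] at hs
    have hs' : (0 : ℝ) < s := hs
    rw [h.deriv_deriv s hs']
    have hderiv : q s * p s * exp ((-M) s) + deriv p s * (exp ((-M) s) * -(s * q s))
        = -(exp (-M s) * (q s * (s * deriv p s - p s))) := by
      simp only [Pi.neg_apply]
      ring
    rw [hderiv, neg_nonpos]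
    exact mul_nonneg (exp_pos _).le (mul_nonneg (hq s) (sub_nonneg.2 (h.le_mul_deriv hq hs'.le)))
  have := hanti self_mem_Ici ht ht
  simp only [h.deriv_zero, M, intervalIntegral.integral_same, neg_zero, exp_zero, mul_one,
    exp_neg] at this
  rwa [mul_inv_le_iff₀ (exp_pos _), one_mul] at this

theorem le_exp_integral_mul (h : IsGeneralizedSine q p) (hq : 0 ≤ q) (hqc : Continuous q)
    {ρ lam : ℝ} (hρ : 0 ≤ ρ) (hρlam : ρ ≤ lam) :
    p ρ ≤ exp (∫ s in (0 : ℝ)..lam, s * q s) * ρ := by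
  have hint : ∫ s in (0 : ℝ)..ρ, s * q s ≤ ∫ s in (0 : ℝ)..lam, s * q s :=
    intervalIntegral.integral_mono_interval le_rfl hρ hρlam
      ((ae_restrict_iff' measurableSet_Ioc).2 (Filter.Eventually.of_forall fun s hs =>
        mul_nonneg hs.1.le (hq s)))
      ((continuous_id.mul hqc).intervalIntegrable _ _)
  calc p ρ ≤ ρ * deriv p ρ := h.le_mul_deriv hq hρ
    _ ≤ ρ * exp (∫ s in (0 : ℝ)..ρ, s * q s) :=
        mul_le_mul_of_nonneg_left (h.deriv_le_exp_integral hq hqc hρ) hρ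
    _ ≤ exp (∫ s in (0 : ℝ)..lam, s * q s) * ρ := by
        rw [mul_comm]
        exact mul_le_mul_of_nonneg_right (exp_le_exp.2 hint) hρ

end IsGeneralizedSine

theorem stmt_3_general (κ p : ℝ → ℝ) (hκ : Continuous κ) (hp : ContDiff ℝ 2 p)
    (hode : ∀ t > (0:ℝ), deriv (deriv p) t = max (-κ t) 0 * p t)
    (hp0 : p 0 = 0) (hp'0 : deriv p 0 = 1) (lam : ℝ) :
    ∀ ρ ∈ Set.Icc (0:ℝ) lam,
      ρ ≤ p ρ ∧ p ρ ≤ Real.exp (∫ s in (0:ℝ)..lam, s * max (-κ s) 0) * ρ := by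
  have hp' : ContDiff ℝ 1 (deriv p) := (contDiff_succ_iff_deriv.1 hp).2.2
  have hsol : IsGeneralizedSine (fun s => max (-κ s) 0) p :=
    ⟨hp.differentiable two_ne_zero, hp'.differentiable one_ne_zero, hode, hp0, hp'0⟩
  have hq : 0 ≤ fun s => max (-κ s) 0 := fun s => le_max_right _ _
  rintro ρ ⟨hρ, hρlam⟩
  exact ⟨hsol.le_self hq hρ, hsol.le_exp_integral_mul hq (hκ.neg.max continuous_const) hρ hρlam⟩

/-- if `p₋` solves `p₋'' = κ₋ p₋` with `p₋ 0 = 0`, `p₋' 0 = 1`,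
where `κ₋ = max (-κ) 0`, then for `λ > 0`,
`ρ ≤ p₋(ρ) ≤ exp (∫₀^λ s κ₋(s) ds) · ρ` for all `ρ ∈ [0, λ]`. -/
theorem stmt_3 (κ p : ℝ → ℝ) (hκ : Continuous κ) (hp : ContDiff ℝ 2 p)
    (hode : ∀ t > (0:ℝ), deriv (deriv p) t = max (-κ t) 0 * p t)
    (hp0 : p 0 = 0) (hp'0 : deriv p 0 = 1) (lam : ℝ) (hlam : 0 < lam) :
    ∀ ρ ∈ Set.Icc (0:ℝ) lam,
      ρ ≤ p ρ ∧ p ρ ≤ Real.exp (∫ s in (0:ℝ)..lam, s * max (-κ s) 0) * ρ :=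
  stmt_3_general κ p hκ hp hode hp0 hp'0 lam
end

section
/- Let κ₊(s) = max{κ(s),0} and p₊ solve p₊'' + κ₊ p₊ = 0 with p₊(0)=0, p₊'(0)=1. If ∫₀^λ s κ₊(s) ds ≤ 1, then p₊'(ρ) > 0 for all ρ ∈ [0,λ], hence μ₀(λ) := min_{[0,λ]} p₊' satisfies 0 < μ₀(λ) ≤ 1 and μ₀(λ) ρ ≤ p₊(ρ) ≤ ρ on [0,λ]. -/
/-!
Let `ρ` be the first point where `p₊'` fails to be positive. On `[0, ρ]` the solution is increasing,
so `p₊ ≥ 0`, hence `p₊'' = -κ₊ p₊ ≤ 0` and `p₊' ≤ 1`, hence `p₊(s) ≤ s`. Integrating the equation,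
`1 ≤ 1 - p₊'(ρ) = ∫₀^ρ κ₊ p₊ ≤ ∫₀^ρ s κ₊ ≤ 1`, and the middle inequality is strict: at a point where
`κ₊ p₊ > 0` we cannot have `p₊(s) = s`, since that forces `p₊ = id` on `[0, s]`, so `p₊'' = 0` there and
`κ₊ p₊` vanishes on `[0, s]`.
-/

open Set Filter MeasureTheory intervalIntegral

theorem exists_first_nonpos_of_continuousOn {f : ℝ → ℝ} {a b : ℝ} (hf : ContinuousOn f (Icc a b))
    (hab : a ≤ b) (ha : 0 < f a) (hb : f b ≤ 0) :
    ∃ c ∈ Ioc a b, f c ≤ 0 ∧ ∀ t ∈ Ico a c, 0 < f t := by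
  obtain ⟨c, ⟨hc, hfc⟩, hleast⟩ :=
    (isCompact_Icc.of_isClosed_subset (hf.preimage_isClosed_of_isClosed isClosed_Icc isClosed_Iic)
      inter_subset_left).exists_isLeast ⟨b, ⟨hab, le_rfl⟩, hb⟩
  have hac : a < c := hc.1.lt_of_ne fun h => (h ▸ ha).not_ge hfc
  refine ⟨c, ⟨hac, hc.2⟩, hfc, fun t ht => ?_⟩
  by_contra! hft
  exact (hleast ⟨⟨ht.1, ht.2.le.trans hc.2⟩, hft⟩).not_gt ht.2

theorem mul_le_apply_of_le_deriv {f : ℝ → ℝ} {C c : ℝ} (hf : ContinuousOn f (Icc 0 c))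
    (hf' : DifferentiableOn ℝ f (Ioo 0 c)) (hf0 : f 0 = 0) (h : ∀ t ∈ Ioo 0 c, C ≤ deriv f t) :
    ∀ t ∈ Icc 0 c, C * t ≤ f t := fun t ht => by
  have := (convex_Icc 0 c).mul_sub_le_image_sub_of_le_deriv hf (by rwa [interior_Icc])
    (by rwa [interior_Icc]) 0 ⟨le_rfl, ht.1.trans ht.2⟩ t ht ht.1
  simpa [hf0] using this

theorem apply_le_mul_of_deriv_le {f : ℝ → ℝ} {C c : ℝ} (hf : ContinuousOn f (Icc 0 c))
    (hf' : DifferentiableOn ℝ f (Ioo 0 c)) (hf0 : f 0 = 0) (h : ∀ t ∈ Ioo 0 c, deriv f t ≤ C) :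
    ∀ t ∈ Icc 0 c, f t ≤ C * t := fun t ht => by
  have := (convex_Icc 0 c).image_sub_le_mul_sub_of_deriv_le hf (by rwa [interior_Icc])
    (by rwa [interior_Icc]) 0 ⟨le_rfl, ht.1.trans ht.2⟩ t ht ht.1
  simpa [hf0] using this

section Jacobi

variable {K p : ℝ → ℝ}

theorem deriv_le_one_of_deriv_nonneg (hK0 : ∀ t, 0 ≤ K t) (hp : Differentiable ℝ p)
    (hp' : Differentiable ℝ (deriv p)) (hode : ∀ t > 0, deriv (deriv p) t = -(K t * p t))
    (hp0 : p 0 = 0) (hp'0 : deriv p 0 = 1) {c : ℝ} (hq : ∀ t ∈ Ioo 0 c, 0 ≤ deriv p t) :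
    ∀ t ∈ Icc 0 c, deriv p t ≤ 1 := by
  have hpnn : ∀ t ∈ Icc 0 c, 0 ≤ p t := by
    simpa using mul_le_apply_of_le_deriv hp.continuous.continuousOn hp.differentiableOn hp0 hq
  have hanti : AntitoneOn (deriv p) (Icc 0 c) := by
    refine antitoneOn_of_deriv_nonpos (convex_Icc 0 c) hp'.continuous.continuousOn
      hp'.differentiableOn fun s hs => ?_
    rw [interior_Icc] at hs
    rw [hode s hs.1, neg_nonpos]
    exact mul_nonneg (hK0 s) (hpnn s (Ioo_subset_Icc_self hs))
  exact fun t ht => hp'0 ▸ hanti (left_mem_Icc.mpr (ht.1.trans ht.2)) ht ht.1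

theorem integral_mul_eq_one_sub_deriv (hK : Continuous K) (hp : Differentiable ℝ p)
    (hp' : Differentiable ℝ (deriv p)) (hode : ∀ t > 0, deriv (deriv p) t = -(K t * p t))
    (hp'0 : deriv p 0 = 1) {c : ℝ} (hc : 0 ≤ c) :
    ∫ s in 0..c, K s * p s = 1 - deriv p c := by
  have hFTC : ∫ s in 0..c, -(K s * p s) = deriv p c - deriv p 0 :=
    integral_eq_sub_of_hasDerivAt_of_le hc hp'.continuous.continuousOn
      (fun t ht => hode t ht.1 ▸ (hp' t).hasDerivAt)
      ((hK.mul hp.continuous).neg.intervalIntegrable 0 c)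
  rw [intervalIntegral.integral_neg, hp'0] at hFTC
  linarith

theorem mul_apply_eq_zero_of_apply_eq_self (hK : Continuous K) (hp : Differentiable ℝ p)
    (hode : ∀ t > 0, deriv (deriv p) t = -(K t * p t)) (hp0 : p 0 = 0) {c : ℝ} (hc : 0 < c)
    (hq1 : ∀ t ∈ Ioo 0 c, deriv p t ≤ 1) (hpc : p c = c) : K c * p c = 0 := by
  have hid : EqOn p id (Icc 0 c) := fun t ht => by
    have hle := (convex_Icc 0 c).image_sub_le_mul_sub_of_deriv_le hp.continuous.continuousOn
      hp.differentiableOn (by rwa [interior_Icc]) t ht c ⟨hc.le, le_rfl⟩ ht.2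
    have hge := apply_le_mul_of_deriv_le hp.continuous.continuousOn hp.differentiableOn hp0 hq1 t ht
    simp only [id, one_mul, hpc] at hle hge ⊢
    linarith
  have hKp : EqOn (fun t => K t * p t) 0 (Ioo 0 c) := fun t ht => by
    have hp'1 : deriv p =ᶠ[nhds t] fun _ => 1 := by
      filter_upwards [Ioo_mem_nhds ht.1 ht.2] with s hs
      have hloc : p =ᶠ[nhds s] id :=
        eventually_of_mem (Ioo_mem_nhds hs.1 hs.2) fun u hu => hid (Ioo_subset_Icc_self hu)
      rw [hloc.deriv_eq, deriv_id]
    have h0 := hode t ht.1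
    rw [hp'1.deriv_eq, deriv_const] at h0
    simpa using neg_eq_zero.mp h0.symm
  have hcl : c ∈ closure (Ioo 0 c) := by rw [closure_Ioo hc.ne]; exact right_mem_Icc.mpr hc.le
  exact hKp.closure (hK.mul hp.continuous) continuous_const hcl

theorem deriv_pos_of_integral_mul_le_one (hK : Continuous K) (hK0 : ∀ t, 0 ≤ K t)
    (hp : Differentiable ℝ p) (hp' : Differentiable ℝ (deriv p))
    (hode : ∀ t > 0, deriv (deriv p) t = -(K t * p t)) (hp0 : p 0 = 0) (hp'0 : deriv p 0 = 1)
    {lam : ℝ} (hμ : ∫ s in 0..lam, s * K s ≤ 1) : ∀ ρ ∈ Icc 0 lam, 0 < deriv p ρ := by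
  intro ρ hρ
  by_contra! hρ0
  obtain ⟨c, hc, hqc, hq⟩ := exists_first_nonpos_of_continuousOn hp'.continuous.continuousOn hρ.1
    (hp'0 ▸ one_pos) hρ0
  have hq1 := deriv_le_one_of_deriv_nonneg hK0 hp hp' hode hp0 hp'0 (c := c)
    fun t ht => (hq t (Ioo_subset_Ico_self ht)).le
  have hpt : ∀ t ∈ Icc 0 c, p t ≤ t := by
    simpa using apply_le_mul_of_deriv_le hp.continuous.continuousOn hp.differentiableOn hp0
      fun t ht => hq1 t (Ioo_subset_Icc_self ht)
  have hKp : Continuous fun s => K s * p s := hK.mul hp.continuous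
  have hsK : Continuous fun s => s * K s := continuous_id.mul hK
  have hone : 1 ≤ ∫ s in 0..c, K s * p s := by
    rw [integral_mul_eq_one_sub_deriv hK hp hp' hode hp'0 hc.1.le]
    linarith
  obtain ⟨d, hd, hKpd⟩ : ∃ d ∈ Icc 0 c, 0 < K d * p d := by
    by_contra! h
    have := integral_mono_on hc.1.le (hKp.intervalIntegrable 0 c)
      (intervalIntegrable_const (μ := volume)) h
    rw [intervalIntegral.integral_zero] at this
    linarith
  have hd0 : 0 < d := hd.1.lt_of_ne fun h => by simp [← h, hp0] at hKpd
  have hpd : p d < d := (hpt d hd).lt_of_ne fun h => hKpd.ne' <|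
    mul_apply_eq_zero_of_apply_eq_self hK hp hode hp0 hd0
      (fun t ht => hq1 t ⟨ht.1.le, ht.2.le.trans hd.2⟩) h
  have hKd : 0 < K d := (hK0 d).lt_of_ne fun h => by simp [← h] at hKpd
  have hlt : ∫ s in 0..c, K s * p s < ∫ s in 0..c, s * K s :=
    integral_lt_integral_of_continuousOn_of_le_of_exists_lt hc.1 hKp.continuousOn hsK.continuousOn
      (fun t ht => by nlinarith [hK0 t, hpt t (Ioc_subset_Icc_self ht)])
      ⟨d, hd, by rw [mul_comm d]; exact mul_lt_mul_of_pos_left hpd hKd⟩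
  have hmono : ∫ s in 0..c, s * K s ≤ ∫ s in 0..lam, s * K s :=
    integral_mono_interval le_rfl hc.1.le (hc.2.trans hρ.2)
      ((ae_restrict_iff' measurableSet_Ioc).mpr <|
        ae_of_all _ fun s hs => mul_nonneg hs.1.le (hK0 s))
      (hsK.intervalIntegrable 0 lam)
  linarith

end Jacobi

/-- if `p₊` solves `p₊'' + κ₊ p₊ = 0` (`κ₊ = max κ 0`) with `p₊ 0 = 0`,
`p₊' 0 = 1`, and `∫₀^λ s κ₊(s) ds ≤ 1`, then `p₊' > 0` on `[0,λ]`, hence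
`μ₀(λ) = inf_{[0,λ]} p₊'` satisfies `0 < μ₀(λ) ≤ 1` and `μ₀(λ) ρ ≤ p₊(ρ) ≤ ρ` on `[0,λ]`. -/
theorem stmt_4 (κ p : ℝ → ℝ) (hκ : Continuous κ) (hp : ContDiff ℝ 2 p)
    (hode : ∀ t > (0:ℝ), deriv (deriv p) t + max (κ t) 0 * p t = 0)
    (hp0 : p 0 = 0) (hp'0 : deriv p 0 = 1) (lam : ℝ) (hlam : 0 < lam)
    (hμ : (∫ s in (0:ℝ)..lam, s * max (κ s) 0) ≤ 1) :
    (∀ ρ ∈ Set.Icc (0:ℝ) lam, 0 < deriv p ρ) ∧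
      0 < sInf (deriv p '' Set.Icc (0:ℝ) lam) ∧
      sInf (deriv p '' Set.Icc (0:ℝ) lam) ≤ 1 ∧
      ∀ ρ ∈ Set.Icc (0:ℝ) lam,
        sInf (deriv p '' Set.Icc (0:ℝ) lam) * ρ ≤ p ρ ∧ p ρ ≤ ρ := by
  have hK : Continuous fun t => max (κ t) 0 := hκ.max continuous_const
  have hp1 : Differentiable ℝ p := hp.differentiable (by norm_num)
  have hp2 : Differentiable ℝ (deriv p) := hp.differentiable_deriv_two
  have hode' : ∀ t > 0, deriv (deriv p) t = -(max (κ t) 0 * p t) :=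
    fun t ht => eq_neg_of_add_eq_zero_left (hode t ht)
  have hpos := deriv_pos_of_integral_mul_le_one hK (fun _ => le_max_right _ _) hp1 hp2 hode' hp0
    hp'0 hμ
  have hq1 := deriv_le_one_of_deriv_nonneg (fun _ => le_max_right _ _) hp1 hp2 hode' hp0 hp'0
    fun t ht => (hpos t (Ioo_subset_Icc_self ht)).le
  have himage := (isCompact_Icc (a := 0) (b := lam)).image hp2.continuous
  obtain ⟨c, hc, hμc⟩ := himage.sInf_mem ⟨_, mem_image_of_mem _ (left_mem_Icc.mpr hlam.le)⟩
  have hle : ∀ t ∈ Icc 0 lam, sInf (deriv p '' Icc 0 lam) ≤ deriv p t :=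
    fun t ht => csInf_le himage.bddBelow (mem_image_of_mem _ ht)
  refine ⟨hpos, hμc ▸ hpos c hc, hp'0 ▸ hle 0 (left_mem_Icc.mpr hlam.le), fun ρ hρ => ⟨?_, ?_⟩⟩
  · exact mul_le_apply_of_le_deriv hp1.continuous.continuousOn hp1.differentiableOn hp0
      (fun t ht => hle t (Ioo_subset_Icc_self ht)) ρ hρ
  · simpa using apply_le_mul_of_deriv_le hp1.continuous.continuousOn hp1.differentiableOn hp0
      (fun t ht => hq1 t (Ioo_subset_Icc_self ht)) ρ hρ
end

section
/- Let f solve f'' + κ f = 0, f(0)=0, f'(0)=1, and suppose ∫₀^λ s κ₊(s) ds ≤ 1 where κ₊ = max{κ,0} and κ₋ = max{-κ,0}. Then there exists μ₀(λ) ∈ (0,1] such that μ₀(λ) ρ ≤ f(ρ) ≤ e^{μ₋(λ)} ρ and μ₀(λ) ≤ f'(ρ) ≤ e^{μ₋(λ)} for all ρ ∈ [0,λ], where μ₋(λ) = ∫₀^λ s κ₋(s) ds. -/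
/-!
Both identities `f' ρ = 1 - ∫₀^ρ κ f` and `f ρ - ρ f' ρ = ∫₀^ρ s κ(s) f(s) ds` come from integrating
the equation. If `f'` had a first nonpositive point `c ∈ (0, λ]`, then `f` would be strictly
increasing on `[0, c]`, so `∫₀^c s κ f ≤ ∫₀^c s κ₊ f < f c` because `μ₊(λ) ≤ 1`, and the second
identity would force `c f'(c) > 0`. Hence `f' > 0` on `[0, λ]`, and `μ₀` is its minimum there.
For the upper bound, `B ρ = 1 + ∫₀^ρ κ₋ f` is increasing and dominates `f'`, so `f ρ ≤ ρ B ρ`;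
thus `B' ≤ ρ κ₋(ρ) B`, and Gronwall's argument (`B e^{-∫₀^ρ s κ₋}` is antitone) gives `B ≤ e^{μ₋}`.
-/

open Set MeasureTheory intervalIntegral

theorem mul_le_of_le_deriv {f : ℝ → ℝ} (hf : Differentiable ℝ f) (hf0 : f 0 = 0) {m ρ : ℝ}
    (hρ : 0 ≤ ρ) (h : ∀ s ∈ Ioo 0 ρ, m ≤ deriv f s) : m * ρ ≤ f ρ := by
  have := (convex_Icc 0 ρ).mul_sub_le_image_sub_of_le_deriv hf.continuous.continuousOn
    hf.differentiableOn (by rwa [interior_Icc]) 0 (left_mem_Icc.2 hρ) ρ (right_mem_Icc.2 hρ) hρ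
  rwa [hf0, sub_zero, sub_zero] at this

theorem le_mul_of_deriv_le {f : ℝ → ℝ} (hf : Differentiable ℝ f) (hf0 : f 0 = 0) {M ρ : ℝ}
    (hρ : 0 ≤ ρ) (h : ∀ s ∈ Ioo 0 ρ, deriv f s ≤ M) : f ρ ≤ M * ρ := by
  have := (convex_Icc 0 ρ).image_sub_le_mul_sub_of_deriv_le hf.continuous.continuousOn
    hf.differentiableOn (by rwa [interior_Icc]) 0 (left_mem_Icc.2 hρ) ρ (right_mem_Icc.2 hρ) hρ
  rwa [hf0, sub_zero, sub_zero] at this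

theorem exists_first_nonpos {g : ℝ → ℝ} {a b : ℝ} (hg : ContinuousOn g (Icc a b))
    (ha : 0 < g a) (h : ∃ x ∈ Icc a b, g x ≤ 0) :
    ∃ c ∈ Ioc a b, g c ≤ 0 ∧ ∀ s ∈ Ico a c, 0 < g s := by
  have hT : IsCompact (Icc a b ∩ g ⁻¹' Iic 0) :=
    isCompact_Icc.of_isClosed_subset (hg.preimage_isClosed_of_isClosed isClosed_Icc isClosed_Iic)
      inter_subset_left
  obtain ⟨c, ⟨hc, hgc⟩, hleast⟩ := hT.exists_isLeast h
  have hac : a ≠ c := by rintro rfl; exact lt_irrefl 0 (ha.trans_le hgc)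
  refine ⟨c, ⟨lt_of_le_of_ne hc.1 hac, hc.2⟩, hgc, fun s hs => ?_⟩
  by_contra! hgs
  exact (hleast ⟨⟨hs.1, hs.2.le.trans hc.2⟩, hgs⟩).not_gt hs.2

theorem integral_mul_lt_of_strictMonoOn {w g : ℝ → ℝ} {a b : ℝ} (hab : a < b)
    (hw : Continuous w) (hw_nonneg : ∀ s ∈ Icc a b, 0 ≤ w s) (hw_int : ∫ s in a..b, w s ≤ 1)
    (hg : Continuous g) (hg_mono : StrictMonoOn g (Icc a b)) (hga : 0 ≤ g a) :
    ∫ s in a..b, w s * g s < g b := by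
  have hb : b ∈ Icc a b := right_mem_Icc.2 hab.le
  have hgb : 0 < g b := hga.trans_lt (hg_mono (left_mem_Icc.2 hab.le) hb hab)
  by_cases hpos : ∃ s ∈ Ioo a b, 0 < w s
  · obtain ⟨c, hc, hwc⟩ := hpos
    calc ∫ s in a..b, w s * g s < ∫ s in a..b, w s * g b := by
          refine integral_lt_integral_of_continuousOn_of_le_of_exists_lt hab
            (hw.mul hg).continuousOn (hw.mul continuous_const).continuousOn
            (fun s hs => mul_le_mul_of_nonneg_left ?_ (hw_nonneg s (Ioc_subset_Icc_self hs)))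
            ⟨c, Ioo_subset_Icc_self hc,
              mul_lt_mul_of_pos_left (hg_mono (Ioo_subset_Icc_self hc) hb hc.2) hwc⟩
          exact hg_mono.monotoneOn (Ioc_subset_Icc_self hs) hb hs.2
      _ = (∫ s in a..b, w s) * g b := integral_mul_const _ _
      _ ≤ g b := mul_le_of_le_one_left hgb.le hw_int
  · push Not at hpos
    have hw_zero : EqOn w 0 (Icc a b) := by
      have hIoo : EqOn w 0 (Ioo a b) := fun s hs =>
        le_antisymm (hpos s hs) (hw_nonneg s (Ioo_subset_Icc_self hs))
      simpa only [closure_Ioo hab.ne] using hIoo.closure hw continuous_const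
    have hzero : ∫ s in a..b, w s * g s = 0 := by
      rw [integral_congr (g := fun _ => (0 : ℝ)) fun s hs => by
        simp [hw_zero (by rwa [uIcc_of_le hab.le] at hs)]]
      simp
    rwa [hzero]

theorem le_mul_exp_sub_of_hasDerivAt {B B' W w : ℝ → ℝ} {a b : ℝ} (hab : a ≤ b)
    (hB : ∀ t ∈ Icc a b, HasDerivAt B (B' t) t) (hW : ∀ t ∈ Icc a b, HasDerivAt W (w t) t)
    (hle : ∀ t ∈ Ioo a b, B' t ≤ w t * B t) : B b ≤ B a * Real.exp (W b - W a) := by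
  set G : ℝ → ℝ := fun t => B t * Real.exp (-W t)
  have hG : ∀ t ∈ Icc a b, HasDerivAt G ((B' t - w t * B t) * Real.exp (-W t)) t := fun t ht =>
    ((hB t ht).mul (hW t ht).neg.exp).congr_deriv (by simp only [Pi.neg_apply]; ring)
  have hanti : AntitoneOn G (Icc a b) := by
    refine antitoneOn_of_deriv_nonpos (convex_Icc a b)
      (fun t ht => (hG t ht).continuousAt.continuousWithinAt)
      (fun t ht => (hG t (interior_subset ht)).differentiableAt.differentiableWithinAt)
      fun t ht => ?_
    rw [interior_Icc] at ht
    rw [(hG t (Ioo_subset_Icc_self ht)).deriv]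
    exact mul_nonpos_of_nonpos_of_nonneg (sub_nonpos.2 (hle t ht)) (Real.exp_pos _).le
  have hGab : G b ≤ G a := hanti (left_mem_Icc.2 hab) (right_mem_Icc.2 hab) hab
  calc B b = G b * Real.exp (W b) := by
        simp only [G, mul_assoc, ← Real.exp_add, neg_add_cancel, Real.exp_zero, mul_one]
    _ ≤ G a * Real.exp (W b) := by gcongr
    _ = B a * Real.exp (W b - W a) := by simp only [G, mul_assoc, ← Real.exp_add, neg_add_eq_sub]

theorem integral_mul_max_zero_le_of_le {g : ℝ → ℝ} (hg : Continuous g) {a b : ℝ} (ha : 0 ≤ a)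
    (hab : a ≤ b) : ∫ s in (0:ℝ)..a, s * max (g s) 0 ≤ ∫ s in (0:ℝ)..b, s * max (g s) 0 := by
  refine integral_mono_interval le_rfl ha hab ?_
    ((continuous_id.mul (hg.max continuous_const)).intervalIntegrable _ _)
  filter_upwards [ae_restrict_mem measurableSet_Ioc] with s hs
  exact mul_nonneg hs.1.le (le_max_right _ _)

section Jacobi

variable {κ f : ℝ → ℝ}

theorem deriv_eq_sub_integral (hκ : Continuous κ) (hf : Differentiable ℝ f)
    (hf' : Differentiable ℝ (deriv f)) (hode : ∀ t > (0:ℝ), deriv (deriv f) t + κ t * f t = 0)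
    {ρ : ℝ} (hρ : 0 ≤ ρ) : deriv f ρ = deriv f 0 - ∫ s in (0:ℝ)..ρ, κ s * f s := by
  have hFTC := integral_eq_sub_of_hasDerivAt_of_le hρ hf'.continuous.continuousOn
    (fun t ht => (hf' t).hasDerivAt.congr_deriv (eq_neg_of_add_eq_zero_left (hode t ht.1)))
    ((hκ.mul hf.continuous).neg.intervalIntegrable 0 ρ)
  rw [intervalIntegral.integral_neg] at hFTC
  linarith

theorem sub_mul_deriv_eq_integral (hκ : Continuous κ) (hf : Differentiable ℝ f)
    (hf' : Differentiable ℝ (deriv f)) (hode : ∀ t > (0:ℝ), deriv (deriv f) t + κ t * f t = 0)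
    {ρ : ℝ} (hρ : 0 ≤ ρ) : f ρ - ρ * deriv f ρ = f 0 + ∫ s in (0:ℝ)..ρ, s * κ s * f s := by
  have hFTC := integral_eq_sub_of_hasDerivAt_of_le (f := fun t => f t - t * deriv f t)
    (f' := fun s => s * κ s * f s) hρ
    (hf.continuous.sub (continuous_id.mul hf'.continuous)).continuousOn
    (fun t ht => ((hf t).hasDerivAt.sub ((hasDerivAt_id t).mul (hf' t).hasDerivAt)).congr_deriv
      (by rw [eq_neg_of_add_eq_zero_left (hode t ht.1)]; simp only [id]; ring))
    (((continuous_id.mul hκ).mul hf.continuous).intervalIntegrable 0 ρ)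
  simp only [zero_mul, sub_zero] at hFTC
  linarith

theorem deriv_pos_of_integral_le_one (hκ : Continuous κ) (hf : Differentiable ℝ f)
    (hf' : Differentiable ℝ (deriv f)) (hode : ∀ t > (0:ℝ), deriv (deriv f) t + κ t * f t = 0)
    (hf0 : f 0 = 0) (hf'0 : 0 < deriv f 0) {lam : ℝ}
    (hmuP : ∫ s in (0:ℝ)..lam, s * max (κ s) 0 ≤ 1) : ∀ ρ ∈ Icc 0 lam, 0 < deriv f ρ := by
  by_contra! h
  obtain ⟨c, hc, hc_nonpos, hbefore⟩ := exists_first_nonpos hf'.continuous.continuousOn hf'0 h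
  have hmono : StrictMonoOn f (Icc 0 c) :=
    strictMonoOn_of_deriv_pos (convex_Icc 0 c) hf.continuous.continuousOn fun s hs => by
      rw [interior_Icc] at hs; exact hbefore s (Ioo_subset_Ico_self hs)
  have hf_nonneg : ∀ s ∈ Icc 0 c, 0 ≤ f s := fun s hs =>
    hf0 ▸ hmono.monotoneOn (left_mem_Icc.2 hc.1.le) hs hs.1
  have hkp : Continuous fun s => s * max (κ s) 0 := continuous_id.mul (hκ.max continuous_const)
  have hmuP_c : ∫ s in (0:ℝ)..c, s * max (κ s) 0 ≤ 1 :=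
    (integral_mul_max_zero_le_of_le hκ hc.1.le hc.2).trans hmuP
  have hlt : ∫ s in (0:ℝ)..c, s * κ s * f s < f c := calc
    ∫ s in (0:ℝ)..c, s * κ s * f s ≤ ∫ s in (0:ℝ)..c, s * max (κ s) 0 * f s := by
        refine integral_mono_on hc.1.le
          (((continuous_id.mul hκ).mul hf.continuous).intervalIntegrable _ _)
          ((hkp.mul hf.continuous).intervalIntegrable _ _) fun s hs => ?_
        exact mul_le_mul_of_nonneg_right (mul_le_mul_of_nonneg_left (le_max_left _ _) hs.1)
          (hf_nonneg s hs)
    _ < f c := integral_mul_lt_of_strictMonoOn hc.1 hkp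
        (fun s hs => mul_nonneg hs.1 (le_max_right _ _)) hmuP_c hf.continuous hmono hf0.ge
  have hid := sub_mul_deriv_eq_integral hκ hf hf' hode hc.1.le
  nlinarith [mul_nonpos_of_nonneg_of_nonpos hc.1.le hc_nonpos]

theorem deriv_le_mul_exp_integral (hκ : Continuous κ) (hf : Differentiable ℝ f)
    (hf' : Differentiable ℝ (deriv f)) (hode : ∀ t > (0:ℝ), deriv (deriv f) t + κ t * f t = 0)
    (hf0 : f 0 = 0) {ρ : ℝ} (hρ : 0 ≤ ρ) (hf_nonneg : ∀ s ∈ Icc 0 ρ, 0 ≤ f s) :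
    deriv f ρ ≤ deriv f 0 * Real.exp (∫ s in (0:ℝ)..ρ, s * max (-κ s) 0) := by
  have hkm : Continuous fun s => max (-κ s) 0 := hκ.neg.max continuous_const
  set B : ℝ → ℝ := fun t => deriv f 0 + ∫ s in (0:ℝ)..t, max (-κ s) 0 * f s
  have hB : ∀ t, HasDerivAt B (max (-κ t) 0 * f t) t := fun t =>
    ((hkm.mul hf.continuous).integral_hasStrictDerivAt 0 t).hasDerivAt.const_add _
  have hW : ∀ t, HasDerivAt (fun t => ∫ s in (0:ℝ)..t, s * max (-κ s) 0) (t * max (-κ t) 0) t :=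
    fun t => ((continuous_id.mul hkm).integral_hasStrictDerivAt 0 t).hasDerivAt
  have hf'_le : ∀ t ∈ Icc 0 ρ, deriv f t ≤ B t := fun t ht => by
    rw [deriv_eq_sub_integral hκ hf hf' hode ht.1, sub_eq_add_neg,
      ← intervalIntegral.integral_neg]
    refine add_le_add_right (integral_mono_on ht.1
      ((hκ.mul hf.continuous).neg.intervalIntegrable _ _)
      ((hkm.mul hf.continuous).intervalIntegrable _ _) fun s hs => ?_) _
    rw [← neg_mul]
    exact mul_le_mul_of_nonneg_right (le_max_left _ _) (hf_nonneg s ⟨hs.1, hs.2.trans ht.2⟩)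
  have hB_mono : MonotoneOn B (Icc 0 ρ) :=
    monotoneOn_of_deriv_nonneg (convex_Icc 0 ρ)
      (fun t _ => (hB t).continuousAt.continuousWithinAt)
      (fun t _ => (hB t).differentiableAt.differentiableWithinAt) fun t ht => by
        rw [interior_Icc] at ht
        rw [(hB t).deriv]
        exact mul_nonneg (le_max_right _ _) (hf_nonneg t (Ioo_subset_Icc_self ht))
  have hf_le : ∀ t ∈ Icc 0 ρ, f t ≤ B t * t := fun t ht =>
    le_mul_of_deriv_le hf hf0 ht.1 fun s hs =>
      (hf'_le s ⟨hs.1.le, hs.2.le.trans ht.2⟩).trans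
        (hB_mono ⟨hs.1.le, hs.2.le.trans ht.2⟩ ht hs.2.le)
  have hGronwall := le_mul_exp_sub_of_hasDerivAt hρ (fun t _ => hB t) (fun t _ => hW t)
    fun t ht => by
      have := mul_le_mul_of_nonneg_left (hf_le t (Ioo_subset_Icc_self ht)) (le_max_right (-κ t) 0)
      linarith
  simp only [B, integral_same, add_zero, sub_zero] at hGronwall
  exact (hf'_le ρ (right_mem_Icc.2 hρ)).trans hGronwall

end Jacobi

/-- if `f` solves `f'' + κ f = 0`, `f 0 = 0`, `f' 0 = 1`, and
`μ₊(λ) = ∫₀^λ s κ₊(s) ds ≤ 1`, then there is `μ₀(λ) ∈ (0,1]` with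
`μ₀(λ) ρ ≤ f(ρ) ≤ e^{μ₋(λ)} ρ` and `μ₀(λ) ≤ f'(ρ) ≤ e^{μ₋(λ)}` on `[0,λ]`,
where `μ₋(λ) = ∫₀^λ s κ₋(s) ds`. -/
theorem stmt_5 (κ f : ℝ → ℝ) (hκ : Continuous κ) (hf : ContDiff ℝ 2 f)
    (hode : ∀ t > (0:ℝ), deriv (deriv f) t + κ t * f t = 0)
    (hf0 : f 0 = 0) (hf'0 : deriv f 0 = 1) (lam : ℝ) (hlam : 0 < lam)
    (hmuP : (∫ s in (0:ℝ)..lam, s * max (κ s) 0) ≤ 1) :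
    ∃ μ₀ : ℝ, 0 < μ₀ ∧ μ₀ ≤ 1 ∧
      ∀ ρ ∈ Set.Icc (0:ℝ) lam,
        (μ₀ * ρ ≤ f ρ ∧ f ρ ≤ Real.exp (∫ s in (0:ℝ)..lam, s * max (-κ s) 0) * ρ) ∧
        (μ₀ ≤ deriv f ρ ∧ deriv f ρ ≤ Real.exp (∫ s in (0:ℝ)..lam, s * max (-κ s) 0)) := by
  have hd : Differentiable ℝ f := hf.differentiable (by norm_num)
  have hd' : Differentiable ℝ (deriv f) := hf.differentiable_deriv_two
  have hpos := deriv_pos_of_integral_le_one hκ hd hd' hode hf0 (hf'0 ▸ one_pos) hmuP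
  obtain ⟨x₀, hx₀, hmin⟩ := isCompact_Icc.exists_isMinOn (nonempty_Icc.2 hlam.le)
    hd'.continuous.continuousOn
  have hlower : ∀ ρ ∈ Icc 0 lam, deriv f x₀ * ρ ≤ f ρ := fun ρ hρ =>
    mul_le_of_le_deriv hd hf0 hρ.1 fun s hs => hmin ⟨hs.1.le, hs.2.le.trans hρ.2⟩
  have hupper : ∀ ρ ∈ Icc 0 lam,
      deriv f ρ ≤ Real.exp (∫ s in (0:ℝ)..lam, s * max (-κ s) 0) := fun ρ hρ => calc
    deriv f ρ ≤ deriv f 0 * Real.exp (∫ s in (0:ℝ)..ρ, s * max (-κ s) 0) :=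
      deriv_le_mul_exp_integral hκ hd hd' hode hf0 hρ.1 fun s hs =>
        (mul_nonneg (hpos x₀ hx₀).le hs.1).trans (hlower s ⟨hs.1, hs.2.trans hρ.2⟩)
    _ ≤ Real.exp (∫ s in (0:ℝ)..lam, s * max (-κ s) 0) := by
      rw [hf'0, one_mul, Real.exp_le_exp]
      exact integral_mul_max_zero_le_of_le hκ.neg hρ.1 hρ.2
  refine ⟨deriv f x₀, hpos x₀ hx₀, hf'0 ▸ hmin (left_mem_Icc.2 hlam.le), fun ρ hρ =>
    ⟨⟨hlower ρ hρ, ?_⟩, hmin hρ, hupper ρ hρ⟩⟩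
  exact le_mul_of_deriv_le hd hf0 hρ.1 fun s hs => hupper s ⟨hs.1.le, hs.2.le.trans hρ.2⟩
end

section
/- If ∫₀^∞ s κ₊(s) ds ≤ 1 and ∫₀^∞ s κ₋(s) ds < ∞, where κ₊ = max{κ,0}, κ₋ = max{-κ,0}, and f solves f'' + κ f = 0, f(0)=0, f'(0)=1, then there exist constants 0 < μ₀ ≤ μ₁ < ∞ such that μ₀ ≤ f'(ρ) ≤ μ₁ and μ₀ ρ ≤ f(ρ) ≤ μ₁ ρ for all ρ ≥ 0. -/
/-!
With `N t = ∫₀ᵗ κ₋ f`, integrating the equation gives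
`f' t = (1 + N t) (1 - ∫₀ᵗ s κ₊) + D t` with `D t = ∫₀ᵗ κ₊ s ((1 + N t) s - f s) ds`.
While `f ≥ 0` on `[0, t]` we have `f' ≤ 1 + N t` there, so `D t ≥ 0`; moreover `D t > 0` as soon
as `κ > 0` somewhere in `(0, t]`, because `f` can only touch the line `(1 + N t) s` where
`f'' = 0`. So `f'` never reaches `0`, and as `D` is nondecreasing it bounds `f'` away from `0`
outside a compact interval. For the upper bound, `(1 + N)' = κ₋ f ≤ s κ₋ (1 + N)`, and Grönwall
gives `f' ≤ 1 + N ≤ exp ∫₀^∞ s κ₋`.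
-/

open MeasureTheory Set Real

theorem mul_le_of_le_deriv_s6 {g : ℝ → ℝ} (hg : Differentiable ℝ g) (h0 : g 0 = 0) {a ρ : ℝ}
    (hρ : 0 ≤ ρ) (h : ∀ x ∈ Ioo 0 ρ, a ≤ deriv g x) : a * ρ ≤ g ρ := by
  have := (convex_Icc 0 ρ).mul_sub_le_image_sub_of_le_deriv hg.continuous.continuousOn
    hg.differentiableOn (by rwa [interior_Icc]) 0 (left_mem_Icc.2 hρ) ρ (right_mem_Icc.2 hρ) hρ
  simpa [h0] using this

theorem le_mul_of_deriv_le_s6 {g : ℝ → ℝ} (hg : Differentiable ℝ g) (h0 : g 0 = 0) {b ρ : ℝ}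
    (hρ : 0 ≤ ρ) (h : ∀ x ∈ Ioo 0 ρ, deriv g x ≤ b) : g ρ ≤ b * ρ := by
  have := (convex_Icc 0 ρ).image_sub_le_mul_sub_of_deriv_le hg.continuous.continuousOn
    hg.differentiableOn (by rwa [interior_Icc]) 0 (left_mem_Icc.2 hρ) ρ (right_mem_Icc.2 hρ) hρ
  simpa [h0] using this

theorem forall_pos_of_forall_Ico_pos {g : ℝ → ℝ} (hg : Continuous g) (h0 : 0 < g 0)
    (hstep : ∀ T > 0, (∀ t ∈ Ico 0 T, 0 < g t) → 0 < g T) : ∀ t ≥ 0, 0 < g t := by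
  by_contra! hneg
  set S := {t | 0 ≤ t ∧ g t ≤ 0}
  have hbdd : BddBelow S := ⟨0, fun _ ht => ht.1⟩
  obtain ⟨hT0, hgT⟩ : sInf S ∈ S :=
    (isClosed_Ici.inter (isClosed_le hg continuous_const)).csInf_mem hneg hbdd
  have hTpos : 0 < sInf S := hT0.lt_of_ne fun h => by rw [← h] at hgT; linarith
  refine (hstep _ hTpos fun t ht => ?_).not_ge hgT
  by_contra! hgt
  exact notMem_of_lt_csInf ht.2 hbdd ⟨ht.1, hgt⟩

theorem exists_pos_forall_le_of_forall_pos {g : ℝ → ℝ} (hg : Continuous g)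
    (hpos : ∀ t ≥ 0, 0 < g t) {s δ : ℝ} (hδ : 0 < δ) (htail : ∀ t ≥ s, δ ≤ g t) :
    ∃ μ > 0, ∀ t ≥ 0, μ ≤ g t := by
  obtain ⟨x, hx, hmin⟩ :=
    isCompact_Icc.exists_isMinOn (nonempty_Icc.2 (le_max_left 0 s)) hg.continuousOn
  refine ⟨min δ (g x), lt_min hδ (hpos x hx.1), fun t ht => ?_⟩
  rcases le_total t (max 0 s) with h | h
  · exact (min_le_right _ _).trans (hmin ⟨ht, h⟩)
  · exact (min_le_left _ _).trans (htail t ((le_max_right _ _).trans h))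

theorem intervalIntegral_le_integral_Ioi {g : ℝ → ℝ} {a t : ℝ} (hg : IntegrableOn g (Ioi a))
    (hnn : ∀ x > a, 0 ≤ g x) (ht : a ≤ t) : ∫ x in a..t, g x ≤ ∫ x in Ioi a, g x := by
  rw [intervalIntegral.integral_of_le ht]
  exact setIntegral_mono_set hg ((ae_restrict_iff' measurableSet_Ioi).2 (ae_of_all _ hnn))
    Ioc_subset_Ioi_self.eventuallyLE

theorem le_mul_exp_integral_of_hasDerivAt {y y' a : ℝ → ℝ} (ha : Continuous a)
    (hy : ∀ x, HasDerivAt y (y' x) x) (hle : ∀ x ≥ 0, y' x ≤ a x * y x) {t : ℝ} (ht : 0 ≤ t) :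
    y t ≤ y 0 * exp (∫ s in 0..t, a s) := by
  set E := fun x => ∫ s in 0..x, a s
  have hφ : ∀ x, HasDerivAt (fun x => y x * exp (-E x))
      (y' x * exp (-E x) + y x * (exp (-E x) * -a x)) x := fun x =>
    (hy x).mul ((ha.integral_hasStrictDerivAt 0 x).hasDerivAt.neg.exp)
  have hanti : AntitoneOn (fun x => y x * exp (-E x)) (Ici 0) := by
    refine antitoneOn_of_hasDerivWithinAt_nonpos (convex_Ici 0)
      (fun x _ => (hφ x).continuousAt.continuousWithinAt) (fun x _ => (hφ x).hasDerivWithinAt)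
      fun x hx => ?_
    rw [interior_Ici] at hx
    nlinarith [hle x (le_of_lt hx), exp_pos (-E x)]
  have h := hanti self_mem_Ici ht ht
  simp only [E, intervalIntegral.integral_same, neg_zero, exp_zero, mul_one, exp_neg] at h
  rwa [← div_eq_mul_inv, div_le_iff₀ (exp_pos _)] at h

namespace Jacobi

structure IsSolution (κ f : ℝ → ℝ) : Prop where
  continuous_coeff : Continuous κ
  contDiff : ContDiff ℝ 2 f
  ode : ∀ t > (0:ℝ), deriv (deriv f) t + κ t * f t = 0
  apply_zero : f 0 = 0
  deriv_zero : deriv f 0 = 1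

noncomputable def negMass (κ f : ℝ → ℝ) (t : ℝ) : ℝ := ∫ s in 0..t, max (-κ s) 0 * f s

noncomputable def posMass (κ f : ℝ → ℝ) (t : ℝ) : ℝ := ∫ s in 0..t, max (κ s) 0 * f s

noncomputable def defect (κ f : ℝ → ℝ) (t : ℝ) : ℝ :=
  ∫ s in 0..t, max (κ s) 0 * ((1 + negMass κ f t) * s - f s)

variable {κ f : ℝ → ℝ} {s t u : ℝ}

theorem negMass_nonneg (hf : ∀ x ∈ Icc 0 t, 0 ≤ f x) (ht : 0 ≤ t) : 0 ≤ negMass κ f t :=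
  intervalIntegral.integral_nonneg ht fun x hx => mul_nonneg (le_max_right _ _) (hf x hx)

theorem posMass_nonneg (hf : ∀ x ∈ Icc 0 t, 0 ≤ f x) (ht : 0 ≤ t) : 0 ≤ posMass κ f t :=
  intervalIntegral.integral_nonneg ht fun x hx => mul_nonneg (le_max_right _ _) (hf x hx)

theorem negMass_mono (hκ : Continuous κ) (hfc : Continuous f) (hf : ∀ x ∈ Icc 0 t, 0 ≤ f x)
    (hu : 0 ≤ u) (hut : u ≤ t) : negMass κ f u ≤ negMass κ f t :=
  intervalIntegral.integral_mono_interval le_rfl hu hut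
    ((ae_restrict_iff' measurableSet_Ioc).2 <| ae_of_all _ fun x hx =>
      mul_nonneg (le_max_right _ _) (hf x (Ioc_subset_Icc_self hx)))
    ((by fun_prop : Continuous fun s => max (-κ s) 0 * f s).intervalIntegrable 0 t)

theorem integral_mul_posPart_eq_zero (hκ : ∀ x ∈ Ioc 0 t, κ x ≤ 0) (ht : 0 ≤ t) :
    ∫ s in 0..t, s * max (κ s) 0 = 0 := by
  rw [intervalIntegral.integral_of_le ht]
  exact setIntegral_eq_zero_of_forall_eq_zero fun x hx => by simp [max_eq_right (hκ x hx)]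

namespace IsSolution

theorem differentiable (h : IsSolution κ f) : Differentiable ℝ f :=
  h.contDiff.differentiable (by norm_num)

theorem continuous (h : IsSolution κ f) : Continuous f :=
  h.differentiable.continuous

theorem differentiable_deriv (h : IsSolution κ f) : Differentiable ℝ (deriv f) :=
  ((contDiff_succ_iff_deriv (n := 1)).1 h.contDiff).2.2.differentiable one_ne_zero

theorem continuous_deriv (h : IsSolution κ f) : Continuous (deriv f) :=
  h.differentiable_deriv.continuous

theorem deriv_eq (h : IsSolution κ f) (ht : 0 ≤ t) :
    deriv f t = 1 + negMass κ f t - posMass κ f t := by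
  have hκ := h.continuous_coeff
  have hfc := h.continuous
  have hftc : ∫ s in 0..t, -(κ s * f s) = deriv f t - deriv f 0 :=
    intervalIntegral.integral_eq_sub_of_hasDerivAt_of_le ht h.continuous_deriv.continuousOn
      (fun x hx => by
        convert (h.differentiable_deriv x).hasDerivAt using 1
        linarith [h.ode x hx.1])
      ((by fun_prop : Continuous fun s => -(κ s * f s)).intervalIntegrable _ _)
  have hsplit : ∀ s, -(κ s * f s) = max (-κ s) 0 * f s - max (κ s) 0 * f s := fun s => by
    rcases le_total (κ s) 0 with hs | hs <;> simp [hs]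
  rw [funext hsplit, intervalIntegral.integral_sub
    ((by fun_prop : Continuous fun s => max (-κ s) 0 * f s).intervalIntegrable _ _)
    ((by fun_prop : Continuous fun s => max (κ s) 0 * f s).intervalIntegrable _ _),
    h.deriv_zero] at hftc
  rw [negMass, posMass]
  linarith

theorem deriv_eq_defect (h : IsSolution κ f) (ht : 0 ≤ t) :
    deriv f t = (1 + negMass κ f t) * (1 - ∫ s in 0..t, s * max (κ s) 0) + defect κ f t := by
  have hκ := h.continuous_coeff
  have hfc := h.continuous
  have hdefect : defect κ f t =
      (1 + negMass κ f t) * (∫ s in 0..t, s * max (κ s) 0) - posMass κ f t := by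
    rw [defect, posMass, ← intervalIntegral.integral_const_mul, ← intervalIntegral.integral_sub
      ((by fun_prop : Continuous fun s =>
        (1 + negMass κ f t) * (s * max (κ s) 0)).intervalIntegrable _ _)
      ((by fun_prop : Continuous fun s => max (κ s) 0 * f s).intervalIntegrable _ _)]
    congr 1 with s
    ring
  rw [h.deriv_eq ht, hdefect]
  ring

theorem deriv_le (h : IsSolution κ f) (hf : ∀ x ∈ Icc 0 t, 0 ≤ f x) (hu : u ∈ Icc 0 t) :
    deriv f u ≤ 1 + negMass κ f t := by
  have hfu : ∀ x ∈ Icc 0 u, 0 ≤ f x := fun x hx => hf x ⟨hx.1, hx.2.trans hu.2⟩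
  rw [h.deriv_eq hu.1]
  linarith [posMass_nonneg (κ := κ) hfu hu.1,
    negMass_mono h.continuous_coeff h.continuous hf hu.1 hu.2]

theorem le_mul (h : IsSolution κ f) (hf : ∀ x ∈ Icc 0 t, 0 ≤ f x) (hs : s ∈ Icc 0 t) :
    f s ≤ (1 + negMass κ f t) * s :=
  le_mul_of_deriv_le_s6 h.differentiable h.apply_zero hs.1 fun _ hx =>
    h.deriv_le hf ⟨hx.1.le, hx.2.le.trans hs.2⟩

theorem defect_nonneg (h : IsSolution κ f) (hf : ∀ x ∈ Icc 0 t, 0 ≤ f x) (ht : 0 ≤ t) :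
    0 ≤ defect κ f t :=
  intervalIntegral.integral_nonneg ht fun _ hx =>
    mul_nonneg (le_max_right _ _) (sub_nonneg.2 (h.le_mul hf hx))

theorem defect_mono (h : IsSolution κ f) (hf : ∀ x ∈ Icc 0 u, 0 ≤ f x) (ht : 0 ≤ t)
    (htu : t ≤ u) : defect κ f t ≤ defect κ f u := by
  have hκ := h.continuous_coeff
  have hfc := h.continuous
  have hN := negMass_mono hκ hfc hf ht htu
  calc defect κ f t
      ≤ ∫ s in 0..t, max (κ s) 0 * ((1 + negMass κ f u) * s - f s) :=
        intervalIntegral.integral_mono_on ht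
          ((by fun_prop : Continuous fun s =>
            max (κ s) 0 * ((1 + negMass κ f t) * s - f s)).intervalIntegrable 0 t)
          ((by fun_prop : Continuous fun s =>
            max (κ s) 0 * ((1 + negMass κ f u) * s - f s)).intervalIntegrable 0 t)
          fun x hx => mul_le_mul_of_nonneg_left
            (sub_le_sub_right (mul_le_mul_of_nonneg_right (by linarith) hx.1) _) (le_max_right _ _)
    _ ≤ defect κ f u :=
        intervalIntegral.integral_mono_interval le_rfl ht htu
          ((ae_restrict_iff' measurableSet_Ioc).2 <| ae_of_all _ fun x hx =>
            mul_nonneg (le_max_right _ _)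
              (sub_nonneg.2 (h.le_mul hf (Ioc_subset_Icc_self hx))))
          ((by fun_prop : Continuous fun s =>
            max (κ s) 0 * ((1 + negMass κ f u) * s - f s)).intervalIntegrable 0 u)

/-- Touching the bound of `IsSolution.le_mul` forces `f' ≡ 1 + negMass κ f t` on `[0, s]`,
hence `f'' = 0` and so `κ = 0` on `(0, s)`. -/
theorem coeff_eq_zero_of_mul_le (h : IsSolution κ f) (hf : ∀ x ∈ Icc 0 t, 0 ≤ f x)
    (hs : 0 < s) (hst : s ≤ t) (hfs : (1 + negMass κ f t) * s ≤ f s) : κ s = 0 := by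
  set c := 1 + negMass κ f t
  have hc : 0 < c := by linarith [negMass_nonneg (κ := κ) hf (hs.le.trans hst)]
  have hderiv : ∀ x ∈ Icc 0 s, deriv f x = c := by
    intro x hx
    refine le_antisymm (h.deriv_le hf ⟨hx.1, hx.2.trans hst⟩) (not_lt.1 fun hlt => ?_)
    have hpos : 0 < ∫ y in 0..s, (c - deriv f y) :=
      intervalIntegral.integral_pos hs (continuousOn_const.sub h.continuous_deriv.continuousOn)
        (fun y hy => sub_nonneg.2 (h.deriv_le hf ⟨hy.1.le, hy.2.trans hst⟩))
        ⟨x, hx, sub_pos.2 hlt⟩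
    rw [intervalIntegral.integral_sub intervalIntegrable_const
        (h.continuous_deriv.intervalIntegrable 0 s),
      intervalIntegral.integral_deriv_eq_sub (fun y _ => h.differentiable y)
        (h.continuous_deriv.intervalIntegrable 0 s), h.apply_zero] at hpos
    simp only [intervalIntegral.integral_const, sub_zero, smul_eq_mul] at hpos
    linarith
  have hzero : Ioo 0 s ⊆ {x | κ x = 0} := by
    intro x hx
    have hf'' : deriv (deriv f) x = 0 := by
      have hconst : deriv f =ᶠ[nhds x] fun _ => c :=
        Filter.eventually_of_mem (Ioo_mem_nhds hx.1 hx.2) fun y hy =>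
          hderiv y (Ioo_subset_Icc_self hy)
      rw [hconst.deriv_eq, deriv_const]
    have hderiv' : ∀ y ∈ Ioo 0 x, deriv f y = c := fun y hy =>
      hderiv y ⟨hy.1.le, hy.2.le.trans hx.2.le⟩
    have hfx : f x = c * x :=
      le_antisymm (le_mul_of_deriv_le_s6 h.differentiable h.apply_zero hx.1.le fun y hy =>
          (hderiv' y hy).le)
        (mul_le_of_le_deriv_s6 h.differentiable h.apply_zero hx.1.le fun y hy =>
          (hderiv' y hy).ge)
    have hode := h.ode x hx.1
    rw [hf'', hfx, zero_add] at hode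
    simpa [hc.ne', hx.1.ne'] using hode
  have hclosure := (isClosed_eq h.continuous_coeff continuous_const).closure_subset_iff.2 hzero
  rw [closure_Ioo hs.ne] at hclosure
  exact hclosure (right_mem_Icc.2 hs.le)

theorem defect_pos (h : IsSolution κ f) (hf : ∀ x ∈ Icc 0 t, 0 ≤ f x) (hs : 0 < s)
    (hst : s ≤ t) (hκs : 0 < κ s) : 0 < defect κ f t := by
  have hκ := h.continuous_coeff
  have hfc := h.continuous
  have hgap : f s < (1 + negMass κ f t) * s :=
    lt_of_not_ge fun hle => hκs.ne' (h.coeff_eq_zero_of_mul_le hf hs hst hle)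
  exact intervalIntegral.integral_pos (hs.trans_le hst) (by fun_prop)
    (fun x hx => mul_nonneg (le_max_right _ _)
      (sub_nonneg.2 (h.le_mul hf (Ioc_subset_Icc_self hx))))
    ⟨s, ⟨hs.le, hst⟩, mul_pos (lt_max_of_lt_left hκs) (sub_pos.2 hgap)⟩

theorem one_sub_add_defect_le_deriv (h : IsSolution κ f) (hf : ∀ x ∈ Icc 0 t, 0 ≤ f x)
    (ht : 0 ≤ t) (hA : ∫ s in 0..t, s * max (κ s) 0 ≤ 1) :
    1 - (∫ s in 0..t, s * max (κ s) 0) + defect κ f t ≤ deriv f t := by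
  rw [h.deriv_eq_defect ht]
  nlinarith [negMass_nonneg (κ := κ) hf ht]

theorem deriv_pos_of_nonneg (h : IsSolution κ f) (hf : ∀ x ∈ Icc 0 t, 0 ≤ f x) (ht : 0 ≤ t)
    (hA : ∫ s in 0..t, s * max (κ s) 0 ≤ 1) : 0 < deriv f t := by
  refine lt_of_lt_of_le ?_ (h.one_sub_add_defect_le_deriv hf ht hA)
  by_cases hκ : ∃ s ∈ Ioc 0 t, 0 < κ s
  · obtain ⟨s, hs, hκs⟩ := hκ
    linarith [h.defect_pos hf hs.1 hs.2 hκs]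
  · simp only [not_exists, not_and, not_lt] at hκ
    rw [integral_mul_posPart_eq_zero hκ ht]
    linarith [h.defect_nonneg hf ht]

theorem deriv_pos (h : IsSolution κ f) (hA : ∀ t ≥ 0, ∫ s in 0..t, s * max (κ s) 0 ≤ 1) :
    ∀ t ≥ 0, 0 < deriv f t :=
  forall_pos_of_forall_Ico_pos h.continuous_deriv (by rw [h.deriv_zero]; exact one_pos)
    fun T hT hpos => h.deriv_pos_of_nonneg (fun x hx => by
      simpa using mul_le_of_le_deriv_s6 h.differentiable h.apply_zero hx.1 fun y hy =>
        (hpos y ⟨hy.1.le, hy.2.trans_le hx.2⟩).le) hT.le (hA T hT.le)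

theorem apply_nonneg (h : IsSolution κ f) (hA : ∀ t ≥ 0, ∫ s in 0..t, s * max (κ s) 0 ≤ 1)
    (hu : 0 ≤ u) : 0 ≤ f u := by
  simpa using mul_le_of_le_deriv_s6 h.differentiable h.apply_zero hu fun y hy =>
    (h.deriv_pos hA y hy.1.le).le

theorem exists_pos_le_deriv (h : IsSolution κ f)
    (hA : ∀ t ≥ 0, ∫ s in 0..t, s * max (κ s) 0 ≤ 1) : ∃ μ > 0, ∀ t ≥ 0, μ ≤ deriv f t := by
  have hf : ∀ t, ∀ x ∈ Icc 0 t, 0 ≤ f x := fun _ _ hx => h.apply_nonneg hA hx.1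
  by_cases hκ : ∃ s > 0, 0 < κ s
  · obtain ⟨s, hs, hκs⟩ := hκ
    refine exists_pos_forall_le_of_forall_pos h.continuous_deriv (h.deriv_pos hA)
      (h.defect_pos (hf s) hs le_rfl hκs) (s := s) fun t hst => ?_
    have ht : 0 ≤ t := hs.le.trans hst
    calc defect κ f s ≤ defect κ f t := h.defect_mono (hf t) hs.le hst
      _ ≤ deriv f t := by linarith [h.one_sub_add_defect_le_deriv (hf t) ht (hA t ht), hA t ht]
  · simp only [not_exists, not_and, not_lt] at hκ
    refine exists_pos_forall_le_of_forall_pos h.continuous_deriv (h.deriv_pos hA) one_pos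
      (s := 0) fun t ht => ?_
    have hle := h.one_sub_add_defect_le_deriv (hf t) ht (hA t ht)
    rw [integral_mul_posPart_eq_zero (fun x hx => hκ x hx.1) ht] at hle
    linarith [h.defect_nonneg (hf t) ht]

theorem deriv_le_exp (h : IsSolution κ f) (hA : ∀ t ≥ 0, ∫ s in 0..t, s * max (κ s) 0 ≤ 1)
    (ht : 0 ≤ t) : deriv f t ≤ exp (∫ s in 0..t, s * max (-κ s) 0) := by
  have hκ := h.continuous_coeff
  have hfc := h.continuous
  have hf : ∀ t, ∀ x ∈ Icc 0 t, 0 ≤ f x := fun _ _ hx => h.apply_nonneg hA hx.1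
  have hgronwall := le_mul_exp_integral_of_hasDerivAt (y := fun t => 1 + negMass κ f t)
    (by fun_prop : Continuous fun s => s * max (-κ s) 0)
    (fun x => ((by fun_prop : Continuous fun s => max (-κ s) 0 * f s).integral_hasStrictDerivAt
      0 x).hasDerivAt.const_add 1)
    (fun x hx => by nlinarith [h.le_mul (hf x) ⟨hx, le_rfl⟩, le_max_right (-κ x) 0]) ht
  simp only [negMass, intervalIntegral.integral_same, add_zero, one_mul] at hgronwall
  exact (h.deriv_le (hf t) ⟨ht, le_rfl⟩).trans hgronwall

end IsSolution

end Jacobi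

/-- if `∫₀^∞ s κ₊(s) ds ≤ 1` and `∫₀^∞ s κ₋(s) ds < ∞`, and `f` solves
`f'' + κ f = 0`, `f 0 = 0`, `f' 0 = 1`, then there exist `0 < μ₀ ≤ μ₁ < ∞` with
`μ₀ ≤ f'(ρ) ≤ μ₁` and `μ₀ ρ ≤ f(ρ) ≤ μ₁ ρ` for all `ρ ≥ 0`. -/
theorem stmt_6 (κ f : ℝ → ℝ) (hκ : Continuous κ) (hf : ContDiff ℝ 2 f)
    (hode : ∀ t > (0:ℝ), deriv (deriv f) t + κ t * f t = 0)
    (hf0 : f 0 = 0) (hf'0 : deriv f 0 = 1)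
    (hintP : MeasureTheory.IntegrableOn (fun s => s * max (κ s) 0) (Set.Ioi 0))
    (hmuP : (∫ s in Set.Ioi (0:ℝ), s * max (κ s) 0) ≤ 1)
    (hintM : MeasureTheory.IntegrableOn (fun s => s * max (-κ s) 0) (Set.Ioi 0)) :
    ∃ μ₀ μ₁ : ℝ, 0 < μ₀ ∧ μ₀ ≤ μ₁ ∧
      ∀ ρ ≥ (0:ℝ), (μ₀ ≤ deriv f ρ ∧ deriv f ρ ≤ μ₁) ∧ (μ₀ * ρ ≤ f ρ ∧ f ρ ≤ μ₁ * ρ) := by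
  have h : Jacobi.IsSolution κ f := ⟨hκ, hf, hode, hf0, hf'0⟩
  have hA : ∀ t ≥ 0, ∫ s in 0..t, s * max (κ s) 0 ≤ 1 := fun t ht =>
    (intervalIntegral_le_integral_Ioi hintP (fun s hs => mul_nonneg hs.le (le_max_right _ _))
      ht).trans hmuP
  obtain ⟨μ₀, hμ₀, hlow⟩ := h.exists_pos_le_deriv hA
  set μ₁ := exp (∫ s in Ioi 0, s * max (-κ s) 0)
  have hup : ∀ t ≥ 0, deriv f t ≤ μ₁ := fun t ht =>
    (h.deriv_le_exp hA ht).trans <| exp_le_exp.2 <|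
      intervalIntegral_le_integral_Ioi hintM (fun s hs => mul_nonneg hs.le (le_max_right _ _)) ht
  refine ⟨μ₀, μ₁, hμ₀, (hlow 0 le_rfl).trans (hup 0 le_rfl), fun ρ hρ =>
    ⟨⟨hlow ρ hρ, hup ρ hρ⟩, ?_, ?_⟩⟩
  · exact mul_le_of_le_deriv_s6 h.differentiable hf0 hρ fun x hx => hlow x hx.1.le
  · exact le_mul_of_deriv_le_s6 h.differentiable hf0 hρ fun x hx => hup x hx.1.le
end

section
/- Suppose f : [0,∞) → (0,∞) on (0,∞) with f(0)=0, f'(0)=1 satisfies c₀ ≤ f' ≤ c₁ and c₀ρ ≤ f(ρ) ≤ c₁ρ for constants 0 < c₀ ≤ c₁. Define σ(t) = ∫₀ᵗ f(s)^{n-1} ds and let φ(ρ) = σ⁻¹(σ(ρ) + σ(A)) for A > 0. Then there exist constants C₁ ≥ C₀ > 0 such that C₀(φ(ρ)ⁿ - ρⁿ) ≤ Aⁿ ≤ C₁(φ(ρ)ⁿ - ρⁿ) for all ρ > 0. -/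
/-- with `f(0)=0`, `c₀ ≤ f' ≤ c₁`, `c₀ρ ≤ f ≤ c₁ρ`,
`σ(t) = ∫₀ᵗ f^{n-1}` and `φ(ρ) = σ⁻¹(σ(ρ)+σ(A))` for `A > 0`, there are
`C₁ ≥ C₀ > 0` with `C₀(φ(ρ)ⁿ - ρⁿ) ≤ Aⁿ ≤ C₁(φ(ρ)ⁿ - ρⁿ)` for all `ρ > 0`. -/
theorem stmt_7 (n : ℕ) (hn : 2 ≤ n) (f : ℝ → ℝ) (c₀ c₁ : ℝ)
    (hc₀ : 0 < c₀) (hc : c₀ ≤ c₁) (hf : ContDiff ℝ 1 f) (hf0 : f 0 = 0)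
    (hfpos : ∀ ρ > (0:ℝ), 0 < f ρ)
    (hf' : ∀ ρ ≥ (0:ℝ), c₀ ≤ deriv f ρ ∧ deriv f ρ ≤ c₁)
    (hfb : ∀ ρ ≥ (0:ℝ), c₀ * ρ ≤ f ρ ∧ f ρ ≤ c₁ * ρ)
    (A : ℝ) (hA : 0 < A) (φ : ℝ → ℝ)
    (hφ : ∀ ρ ≥ (0:ℝ), 0 ≤ φ ρ ∧
      (∫ s in (0:ℝ)..(φ ρ), f s ^ (n - 1)) =
        (∫ s in (0:ℝ)..ρ, f s ^ (n - 1)) + ∫ s in (0:ℝ)..A, f s ^ (n - 1)) :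
    ∃ C₀ C₁ : ℝ, 0 < C₀ ∧ C₀ ≤ C₁ ∧
      ∀ ρ > (0:ℝ), C₀ * (φ ρ ^ n - ρ ^ n) ≤ A ^ n ∧ A ^ n ≤ C₁ * (φ ρ ^ n - ρ ^ n) := by
  have hc₁ : 0 < c₁ := hc₀.trans_le hc
  set m := n - 1 with hm
  have hmn : m + 1 = n := by omega
  have hmnR : (m : ℝ) + 1 = (n : ℝ) := by exact_mod_cast hmn
  have hnpos : (0:ℝ) < n := by
    have : 0 < n := by omega
    exact_mod_cast this
  have hg : Continuous fun s => f s ^ m := hf.continuous.pow m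
  have hgi : ∀ a b : ℝ, IntervalIntegrable (fun s => f s ^ m) MeasureTheory.volume a b :=
    fun a b => hg.intervalIntegrable a b
  have fnn : ∀ s : ℝ, 0 ≤ s → 0 ≤ f s := fun s hs =>
    le_trans (by positivity) (hfb s hs).1
  have key : ∀ a b : ℝ, 0 ≤ a → a ≤ b →
      c₀ ^ m * ((b ^ n - a ^ n) / n) ≤ (∫ s in a..b, f s ^ m) ∧
      (∫ s in a..b, f s ^ m) ≤ c₁ ^ m * ((b ^ n - a ^ n) / n) := by
    intro a b ha hab
    have hpow : ∀ c : ℝ, (∫ s in a..b, c ^ m * s ^ m) = c ^ m * ((b ^ n - a ^ n) / n) := by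
      intro c
      rw [intervalIntegral.integral_const_mul, integral_pow, hmn, hmnR]
    have hci : ∀ c : ℝ, IntervalIntegrable (fun s => c ^ m * s ^ m)
        MeasureTheory.volume a b :=
      fun c => (continuous_const.mul (continuous_pow m)).intervalIntegrable a b
    constructor
    · rw [← hpow c₀]
      apply intervalIntegral.integral_mono_on hab (hci c₀) (hgi a b)
      intro s hs
      have hs0 : 0 ≤ s := ha.trans hs.1
      have h1 := (hfb s hs0).1
      calc c₀ ^ m * s ^ m = (c₀ * s) ^ m := (mul_pow _ _ _).symm
        _ ≤ f s ^ m := pow_le_pow_left₀ (by positivity) h1 m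
    · rw [← hpow c₁]
      apply intervalIntegral.integral_mono_on hab (hgi a b) (hci c₁)
      intro s hs
      have hs0 : 0 ≤ s := ha.trans hs.1
      have h1 := (hfb s hs0).2
      calc f s ^ m ≤ (c₁ * s) ^ m := pow_le_pow_left₀ (fnn s hs0) h1 m
        _ = c₁ ^ m * s ^ m := mul_pow _ _ _
  refine ⟨(c₀ / c₁) ^ m, (c₁ / c₀) ^ m, pow_pos (div_pos hc₀ hc₁) m, ?_, ?_⟩
  · exact pow_le_pow_left₀ (by positivity)
      ((div_le_div_iff₀ hc₁ hc₀).mpr (by nlinarith)) m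
  intro ρ hρ
  obtain ⟨hφ0, hφeq⟩ := hφ ρ hρ.le
  have hAb := key 0 A le_rfl hA.le
  rw [zero_pow (by omega : n ≠ 0), sub_zero] at hAb
  have hσApos : (0:ℝ) < ∫ s in (0:ℝ)..A, f s ^ m :=
    lt_of_lt_of_le (by positivity) hAb.1
  have hsplit : (∫ s in ρ..(φ ρ), f s ^ m) = ∫ s in (0:ℝ)..A, f s ^ m := by
    have h2 := intervalIntegral.integral_add_adjacent_intervals (hgi 0 ρ) (hgi ρ (φ ρ))
    rw [hφeq] at h2
    linarith
  have hρφ : ρ ≤ φ ρ := by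
    by_contra h
    push_neg at h
    have h3 : 0 ≤ ∫ s in (φ ρ)..ρ, f s ^ m :=
      intervalIntegral.integral_nonneg h.le
        (fun s hs => pow_nonneg (fnn s (hφ0.trans hs.1)) m)
    have h4 : (∫ s in ρ..(φ ρ), f s ^ m) = - ∫ s in (φ ρ)..ρ, f s ^ m :=
      intervalIntegral.integral_symm _ _
    linarith
  have hDb := key ρ (φ ρ) hρ.le hρφ
  rw [hsplit] at hDb
  have h1 : c₀ ^ m * (φ ρ ^ n - ρ ^ n) ≤ c₁ ^ m * A ^ n := by
    have h := hDb.1.trans hAb.2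
    rw [← mul_div_assoc, ← mul_div_assoc] at h
    exact (div_le_div_iff_of_pos_right hnpos).mp h
  have h2 : c₀ ^ m * A ^ n ≤ c₁ ^ m * (φ ρ ^ n - ρ ^ n) := by
    have h := hAb.1.trans hDb.2
    rw [← mul_div_assoc, ← mul_div_assoc] at h
    exact (div_le_div_iff_of_pos_right hnpos).mp h
  have hc₀m : (0:ℝ) < c₀ ^ m := pow_pos hc₀ m
  have hc₁m : (0:ℝ) < c₁ ^ m := pow_pos hc₁ m
  constructor
  · rw [div_pow, div_mul_eq_mul_div, div_le_iff₀ hc₁m]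
    nlinarith
  · rw [div_pow, div_mul_eq_mul_div, le_div_iff₀ hc₀m]
    nlinarith
end

section
/- With f, σ, φ as above (f(0)=0, c₀ ≤ f' ≤ c₁, c₀ρ ≤ f ≤ c₁ρ, σ(t)=∫₀ᵗ f^{n-1}, φ(ρ)=σ⁻¹(σ(ρ)+σ(A)), A>0), let τ(ρ) = f(φ(ρ))/f(ρ). Then for fixed τ > 1, as A → 0+ with ρ = ρ(A,τ) determined by f(φ(ρ)) = τ f(ρ), one has lim_{A→0+} A/ρ(A,τ) = (τⁿ - 1)^{1/n}. -/
/-!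
Write `σ` for `ballVolume f n` and `R = ρ(A, τ)`, `φ = φ_A(R)`. Since `f(s)/s → 1` at `0⁺`,
L'Hôpital gives `σ(t)/tⁿ → 1/n`. The two defining relations `σ(φ) = σ(R) + σ(A)` and
`f(φ) = τ f(R)` then give the exact identity
`(A/R)ⁿ = (σ(φ)/φⁿ · (τ (f(R)/R) / (f(φ)/φ))ⁿ - σ(R)/Rⁿ) / (σ(A)/Aⁿ)`,
whose right-hand side tends to `(τⁿ/n - 1/n)/(1/n) = τⁿ - 1` as soon as `R, φ → 0⁺`.
That `R → 0` comes from `σ(A) = σ(φ) - σ(R) ≥ (φ - R)(c₀R)ⁿ⁻¹` together with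
`(τ - 1) f(R) = f(φ) - f(R) ≤ c₁ (φ - R)`, which bound `Rⁿ` by a multiple of `σ(A) → 0`;
then `φ → 0` because `R ≤ φ ≤ τ c₁ R / c₀`.
-/

open Filter Topology Set intervalIntegral

noncomputable def ballVolume (f : ℝ → ℝ) (n : ℕ) (t : ℝ) : ℝ :=
  ∫ s in (0 : ℝ)..t, f s ^ (n - 1)

theorem tendsto_div_self_nhdsGT_zero {f : ℝ → ℝ} {f' : ℝ} (h0 : f 0 = 0)
    (hf : HasDerivAt f f' 0) : Tendsto (fun s => f s / s) (𝓝[>] 0) (𝓝 f') := by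
  refine (hf.tendsto_slope.mono_left (nhdsWithin_mono 0 fun s (hs : 0 < s) => hs.ne')).congr
    fun s => ?_
  simp [slope_def_field, h0]

theorem tendsto_rpow_inv_of_tendsto_pow {α : Type*} {l : Filter α} {x : α → ℝ} {L : ℝ} {n : ℕ}
    (hn : n ≠ 0) (hx : ∀ᶠ i in l, 0 ≤ x i) (h : Tendsto (fun i => x i ^ n) l (𝓝 L)) :
    Tendsto x l (𝓝 (L ^ (n : ℝ)⁻¹)) :=
  (h.rpow_const (Or.inr (by positivity))).congr'
    (hx.mono fun _ hi => Real.pow_rpow_inv_natCast hi hn)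

theorem tendsto_nhdsGT_zero_of_pow_le {α : Type*} {l : Filter α} {x M : α → ℝ} {n : ℕ}
    (hn : n ≠ 0) (hx : ∀ᶠ i in l, 0 < x i) (hxM : ∀ᶠ i in l, x i ^ n ≤ M i)
    (hM : Tendsto M l (𝓝 0)) : Tendsto x l (𝓝[>] 0) := by
  have hpow : Tendsto (fun i => x i ^ n) l (𝓝 0) :=
    tendsto_of_tendsto_of_tendsto_of_le_of_le' tendsto_const_nhds hM
      (hx.mono fun _ hi => by positivity) hxM
  refine tendsto_nhdsWithin_iff.2 ⟨?_, hx⟩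
  simpa [Real.zero_rpow (inv_ne_zero (Nat.cast_ne_zero.2 hn))] using
    tendsto_rpow_inv_of_tendsto_pow hn (hx.mono fun _ hi => hi.le) hpow

theorem le_of_apply_eq_mul {f : ℝ → ℝ} {τ r p : ℝ} (hmono : MonotoneOn f (Ici 0)) (hτ : 1 < τ)
    (hr : 0 ≤ r) (hp : 0 ≤ p) (hfr : 0 < f r) (hfp : f p = τ * f r) : r ≤ p := by
  by_contra! h
  have := hmono hp hr h.le
  nlinarith

theorem tendsto_nhdsGT_zero_of_le_of_le_mul {α : Type*} {l : Filter α} {r p : α → ℝ} {C : ℝ}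
    (hr : Tendsto r l (𝓝[>] 0)) (hrp : ∀ᶠ i in l, r i ≤ p i) (hpr : ∀ᶠ i in l, p i ≤ C * r i) :
    Tendsto p l (𝓝[>] 0) := by
  have hr0 := tendsto_nhds_of_tendsto_nhdsWithin hr
  have hrpos : ∀ᶠ i in l, 0 < r i := hr.eventually eventually_mem_nhdsWithin
  refine tendsto_nhdsWithin_iff.2 ⟨tendsto_of_tendsto_of_tendsto_of_le_of_le' hr0
    (by simpa using hr0.const_mul C) hrp hpr, ?_⟩
  filter_upwards [hrpos, hrp] with i hri hrpi using hri.trans_le hrpi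

theorem le_div_mul_of_apply_eq_mul {f : ℝ → ℝ} {c₀ c₁ τ r p : ℝ} (hc₀ : 0 < c₀) (hτ : 0 ≤ τ)
    (hp : c₀ * p ≤ f p) (hr : f r ≤ c₁ * r) (hfp : f p = τ * f r) : p ≤ τ * c₁ / c₀ * r := by
  rw [div_mul_eq_mul_div, le_div_iff₀ hc₀]
  nlinarith

section ballVolume

variable {f : ℝ → ℝ} {n : ℕ}

theorem hasDerivAt_ballVolume (hf : Continuous f) (t : ℝ) :
    HasDerivAt (ballVolume f n) (f t ^ (n - 1)) t :=
  integral_hasDerivAt_right ((hf.pow _).intervalIntegrable 0 t)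
    ((hf.pow _).stronglyMeasurableAtFilter _ _) (hf.pow _).continuousAt

theorem tendsto_ballVolume_zero (hf : Continuous f) :
    Tendsto (ballVolume f n) (𝓝 0) (𝓝 0) := by
  simpa [ballVolume] using (hasDerivAt_ballVolume (n := n) hf 0).continuousAt.tendsto

theorem ballVolume_pos (hf : Continuous f) (hpos : ∀ s > 0, 0 < f s) {t : ℝ} (ht : 0 < t) :
    0 < ballVolume f n t :=
  intervalIntegral_pos_of_pos_on ((hf.pow _).intervalIntegrable 0 t)
    (fun s hs => pow_pos (hpos s hs.1) _) ht

theorem sub_mul_pow_le_ballVolume_sub (hf : Continuous f) {x y m : ℝ} (hxy : x ≤ y)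
    (hm : 0 ≤ m) (hmf : ∀ s ∈ Icc x y, m ≤ f s) :
    (y - x) * m ^ (n - 1) ≤ ballVolume f n y - ballVolume f n x := by
  have hint (a b : ℝ) : IntervalIntegrable (fun s => f s ^ (n - 1)) MeasureTheory.volume a b :=
    (hf.pow _).intervalIntegrable a b
  rw [ballVolume, ballVolume, integral_interval_sub_left (hint 0 y) (hint 0 x), ← smul_eq_mul,
    ← integral_const]
  exact integral_mono_on hxy intervalIntegrable_const (hint x y)
    fun s hs => pow_le_pow_left₀ hm (hmf s hs) _

theorem tendsto_ballVolume_div_pow (hf : Continuous f) (hn : n ≠ 0)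
    (hslope : Tendsto (fun s => f s / s) (𝓝[>] 0) (𝓝 1)) :
    Tendsto (fun t => ballVolume f n t / t ^ n) (𝓝[>] 0) (𝓝 (n : ℝ)⁻¹) := by
  refine HasDerivAt.lhopital_zero_nhdsGT (.of_forall (hasDerivAt_ballVolume hf))
    (.of_forall fun t => hasDerivAt_pow n t) ?_
    ((tendsto_ballVolume_zero hf).mono_left nhdsWithin_le_nhds) ?_ ?_
  · filter_upwards [self_mem_nhdsWithin] with t (ht : 0 < t)
    positivity
  · simpa [zero_pow hn] using
      ((continuous_pow n).tendsto (0 : ℝ)).mono_left (nhdsWithin_le_nhds (s := Ioi 0))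
  · have h := (hslope.pow (n - 1)).mul_const (n : ℝ)⁻¹
    rw [one_pow, one_mul] at h
    refine h.congr' ?_
    filter_upwards [self_mem_nhdsWithin] with t (ht : 0 < t)
    rw [div_pow]
    field_simp

theorem pow_le_ballVolume_of_ballVolume_add (hf : Continuous f) (hn : n ≠ 0)
    {c₀ c₁ τ a r p : ℝ} (hc₀ : 0 ≤ c₀) (hc₁ : 0 ≤ c₁) (hτ : 1 ≤ τ)
    (hlow : ∀ s ≥ 0, c₀ * s ≤ f s) (hr : 0 ≤ r) (hrp : r ≤ p)
    (hlip : f p - f r ≤ c₁ * (p - r)) (hfp : f p = τ * f r)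
    (hvol : ballVolume f n p = ballVolume f n r + ballVolume f n a) :
    (τ - 1) * c₀ ^ n * r ^ n ≤ c₁ * ballVolume f n a := by
  have hgap : (τ - 1) * (c₀ * r) ≤ c₁ * (p - r) :=
    calc (τ - 1) * (c₀ * r) ≤ (τ - 1) * f r :=
          mul_le_mul_of_nonneg_left (hlow r hr) (sub_nonneg.2 hτ)
      _ = f p - f r := by rw [hfp]; ring
      _ ≤ c₁ * (p - r) := hlip
  have hinc : (p - r) * (c₀ * r) ^ (n - 1) ≤ ballVolume f n a := by
    have := sub_mul_pow_le_ballVolume_sub (n := n) hf hrp (mul_nonneg hc₀ hr)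
      fun s hs => (mul_le_mul_of_nonneg_left hs.1 hc₀).trans (hlow s (hr.trans hs.1))
    rwa [hvol, add_sub_cancel_left] at this
  obtain ⟨k, rfl⟩ := Nat.exists_eq_succ_of_ne_zero hn
  calc (τ - 1) * c₀ ^ (k + 1) * r ^ (k + 1) = (τ - 1) * (c₀ * r) * (c₀ * r) ^ k := by ring
    _ ≤ c₁ * (p - r) * (c₀ * r) ^ k := by gcongr
    _ ≤ c₁ * ballVolume f (k + 1) a := by
      rw [mul_assoc]
      exact mul_le_mul_of_nonneg_left (by simpa using hinc) hc₁

theorem tendsto_div_pow_of_ballVolume_add {α : Type*} {l : Filter α} {a r p : α → ℝ} {τ : ℝ}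
    (hf : Continuous f) (hpos : ∀ s > 0, 0 < f s) (hn : n ≠ 0)
    (hslope : Tendsto (fun s => f s / s) (𝓝[>] 0) (𝓝 1))
    (ha : Tendsto a l (𝓝[>] 0)) (hr : Tendsto r l (𝓝[>] 0)) (hp : Tendsto p l (𝓝[>] 0))
    (hvol : ∀ᶠ i in l, ballVolume f n (p i) = ballVolume f n (r i) + ballVolume f n (a i))
    (hfp : ∀ᶠ i in l, f (p i) = τ * f (r i)) :
    Tendsto (fun i => (a i / r i) ^ n) l (𝓝 (τ ^ n - 1)) := by
  set h := fun t => ballVolume f n t / t ^ n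
  set g := fun t => f t / t
  have hh := tendsto_ballVolume_div_pow hf hn hslope
  have hn' : (n : ℝ)⁻¹ ≠ 0 := inv_ne_zero (Nat.cast_ne_zero.2 hn)
  have key : Tendsto (fun i => (h (p i) * (τ * g (r i) / g (p i)) ^ n - h (r i)) / h (a i)) l
      (𝓝 (((n : ℝ)⁻¹ * (τ * 1 / 1) ^ n - (n : ℝ)⁻¹) / (n : ℝ)⁻¹)) :=
    (((hh.comp hp).mul ((((hslope.comp hr).const_mul τ).div (hslope.comp hp)
      one_ne_zero).pow n)).sub (hh.comp hr)).div (hh.comp ha) hn'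
  rw [show ((n : ℝ)⁻¹ * (τ * 1 / 1) ^ n - (n : ℝ)⁻¹) / (n : ℝ)⁻¹ = τ ^ n - 1 by
    field_simp] at key
  refine key.congr' ?_
  filter_upwards [ha.eventually eventually_mem_nhdsWithin, hr.eventually eventually_mem_nhdsWithin,
    hp.eventually eventually_mem_nhdsWithin, hvol, hfp] with i (hai : 0 < a i) (hri : 0 < r i)
    (hpi : 0 < p i) hvoli hfpi
  have hfr := hpos _ hri
  have hτ : τ ≠ 0 := left_ne_zero_of_mul (hfpi ▸ hpos _ hpi).ne'
  have hσa := ballVolume_pos (n := n) hf hpos hai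
  have hratio : τ * g (r i) / g (p i) = p i / r i := by
    simp only [g, hfpi]
    field_simp
  simp only [h, hratio, div_pow, hvoli]
  field_simp
  ring

theorem tendsto_nhdsGT_zero_of_ballVolume_add (hf : Continuous f) (hn : n ≠ 0) {α : Type*}
    {l : Filter α} {a r p : α → ℝ} {c₀ c₁ τ : ℝ} (hc₀ : 0 < c₀) (hc₁ : 0 ≤ c₁) (hτ : 1 < τ)
    (hlow : ∀ s ≥ 0, c₀ * s ≤ f s) (hlip : ∀ x ≥ 0, ∀ y ≥ x, f y - f x ≤ c₁ * (y - x))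
    (ha : Tendsto a l (𝓝 0)) (hr : ∀ᶠ i in l, 0 < r i) (hrp : ∀ᶠ i in l, r i ≤ p i)
    (hfp : ∀ᶠ i in l, f (p i) = τ * f (r i))
    (hvol : ∀ᶠ i in l, ballVolume f n (p i) = ballVolume f n (r i) + ballVolume f n (a i)) :
    Tendsto r l (𝓝[>] 0) := by
  have hτc₀ : 0 < (τ - 1) * c₀ ^ n := mul_pos (sub_pos.2 hτ) (pow_pos hc₀ n)
  refine tendsto_nhdsGT_zero_of_pow_le hn hr
    (M := fun i => c₁ * ballVolume f n (a i) / ((τ - 1) * c₀ ^ n)) ?_ ?_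
  · filter_upwards [hr, hrp, hfp, hvol] with i hri hrpi hfpi hvoli
    rw [le_div_iff₀ hτc₀]
    linarith [pow_le_ballVolume_of_ballVolume_add hf hn hc₀.le hc₁ hτ.le hlow hri.le hrpi
      (hlip _ hri.le _ hrpi) hfpi hvoli]
  · simpa using (((tendsto_ballVolume_zero hf).comp ha).const_mul c₁).div_const
      ((τ - 1) * c₀ ^ n)

end ballVolume

/-- with `f, σ, φ_A` as in the radial incompressible setting and, for fixed
`τ > 1`, `ρ(A,τ)` the unique `ρ > 0` with `f(φ_A(ρ)) = τ f(ρ)`, one has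
`A / ρ(A,τ) → (τⁿ - 1)^{1/n}` as `A → 0⁺`. -/
theorem stmt_8 (n : ℕ) (hn : 2 ≤ n) (f : ℝ → ℝ) (c₀ c₁ : ℝ)
    (hc₀ : 0 < c₀) (hc : c₀ ≤ c₁) (hf : ContDiff ℝ 1 f) (hf0 : f 0 = 0)
    (hf'0 : deriv f 0 = 1)
    (hf' : ∀ ρ ≥ (0:ℝ), c₀ ≤ deriv f ρ ∧ deriv f ρ ≤ c₁)
    (hfb : ∀ ρ ≥ (0:ℝ), c₀ * ρ ≤ f ρ ∧ f ρ ≤ c₁ * ρ)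
    (φ : ℝ → ℝ → ℝ)
    (hφ : ∀ A > (0:ℝ), ∀ ρ ≥ (0:ℝ), 0 ≤ φ A ρ ∧
      (∫ s in (0:ℝ)..(φ A ρ), f s ^ (n - 1)) =
        (∫ s in (0:ℝ)..ρ, f s ^ (n - 1)) + ∫ s in (0:ℝ)..A, f s ^ (n - 1))
    (τ : ℝ) (hτ : 1 < τ) (R : ℝ → ℝ)
    (hR : ∀ A > (0:ℝ), 0 < R A ∧ f (φ A (R A)) = τ * f (R A)) :
    Tendsto (fun A => A / R A) (𝓝[>] 0) (𝓝 ((τ ^ n - 1) ^ ((n : ℝ)⁻¹))) := by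
  have hn0 : n ≠ 0 := by omega
  have hd : Differentiable ℝ f := hf.differentiable one_ne_zero
  have hpos : ∀ s > 0, 0 < f s := fun s hs => (mul_pos hc₀ hs).trans_le (hfb s hs.le).1
  have hmono : MonotoneOn f (Ici 0) :=
    monotoneOn_of_deriv_nonneg (convex_Ici 0) hd.continuous.continuousOn hd.differentiableOn
      fun s hs => hc₀.le.trans (hf' s (interior_subset hs)).1
  have hlip : ∀ x ≥ 0, ∀ y ≥ x, f y - f x ≤ c₁ * (y - x) := fun x hx y hxy =>
    (convex_Ici 0).image_sub_le_mul_sub_of_deriv_le hd.continuous.continuousOn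
      hd.differentiableOn (fun s hs => (hf' s (interior_subset hs)).2) x hx y (hx.trans hxy) hxy
  have ev {P : ℝ → Prop} (h : ∀ A > 0, P A) : ∀ᶠ A in 𝓝[>] 0, P A :=
    eventually_mem_nhdsWithin.mono h
  have hRpos : ∀ A > 0, 0 < R A := fun A hA => (hR A hA).1
  have hfφ : ∀ A > 0, f (φ A (R A)) = τ * f (R A) := fun A hA => (hR A hA).2
  have hφnn : ∀ A > 0, 0 ≤ φ A (R A) := fun A hA => (hφ A hA _ (hRpos A hA).le).1
  have hvol : ∀ A > 0, ballVolume f n (φ A (R A)) = ballVolume f n (R A) + ballVolume f n A :=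
    fun A hA => (hφ A hA _ (hRpos A hA).le).2
  have hRφ : ∀ A > 0, R A ≤ φ A (R A) := fun A hA =>
    le_of_apply_eq_mul hmono hτ (hRpos A hA).le (hφnn A hA) (hpos _ (hRpos A hA)) (hfφ A hA)
  have hR0 : Tendsto R (𝓝[>] 0) (𝓝[>] 0) :=
    tendsto_nhdsGT_zero_of_ballVolume_add hd.continuous hn0 hc₀ (hc₀.le.trans hc) hτ
      (fun s hs => (hfb s hs).1) hlip (tendsto_id.mono_left nhdsWithin_le_nhds)
      (ev hRpos) (ev hRφ) (ev hfφ) (ev hvol)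
  have hφ0 : Tendsto (fun A => φ A (R A)) (𝓝[>] 0) (𝓝[>] 0) :=
    tendsto_nhdsGT_zero_of_le_of_le_mul hR0 (ev hRφ) <| ev fun A hA =>
      le_div_mul_of_apply_eq_mul hc₀ (by linarith) (hfb _ (hφnn A hA)).1
        (hfb _ (hRpos A hA).le).2 (hfφ A hA)
  exact tendsto_rpow_inv_of_tendsto_pow hn0 (ev fun A hA => (div_pos hA (hRpos A hA)).le)
    (tendsto_div_pow_of_ballVolume_add hd.continuous hpos hn0
      (tendsto_div_self_nhdsGT_zero hf0 (hf'0 ▸ (hd 0).hasDerivAt)) tendsto_id hR0 hφ0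
      (ev hvol) (ev hfφ))
end

section
/- In the flat case f(ρ)=ρ, an equilibrium solution φ satisfies the conservation law d/dρ { ρⁿ [Φ(φ',τ,…,τ) − (φ' − τ) Φ₁] } = n ρ^{n-1} Φ(φ',τ,…,τ), where τ = φ/ρ. -/
/-!
Put `L(s) = Φ(φ'(s), τ(s), …, τ(s))`. By the symmetry of `Φ`, all partial derivatives of `Φ` in
the slots `2, …, n` coincide at a vector of this shape, so `L' = φ'' Φ₁ + (n - 1) τ' Φ₂`, and
`ρ τ' = φ' - τ` since `τ = φ / ρ`. Differentiating `ρⁿ L - ρ (φ' - τ) · ρⁿ⁻¹ Φ₁` by the product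
rule and inserting the equilibrium equation for `(ρⁿ⁻¹ Φ₁)'`, the `φ'' Φ₁`, the `Φ₁` and the
`Φ₂` terms cancel in pairs, leaving `n ρⁿ⁻¹ L`.
-/

open Finset

def radialVec {ι R : Type*} [DecidableEq ι] (i : ι) (a b : R) : ι → R :=
  fun j => if j = i then a else b

section RadialVec

variable {ι R : Type*} [DecidableEq ι]

theorem radialVec_comp_swap {i j k : ι} (hj : j ≠ i) (hk : k ≠ i) (a b : R) :
    radialVec i a b ∘ Equiv.swap j k = radialVec i a b := by
  funext l
  simp only [Function.comp_apply, radialVec, Equiv.swap_apply_def]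
  split_ifs <;> simp_all

theorem map_radialVec [Fintype ι] {M : Type*} [CommRing R] [AddCommGroup M] [Module R M]
    (L : (ι → R) →ₗ[R] M) (i : ι) (c d : R) :
    L (radialVec i c d) = c • L (Pi.single i 1) + d • ∑ j ∈ {i}ᶜ, L (Pi.single j 1) := by
  have hsingle : ∀ j x, L (Pi.single j x) = x • L (Pi.single j 1) := fun j x => by
    rw [← map_smul, ← Pi.single_smul, smul_eq_mul, mul_one]
  conv_lhs => rw [← Finset.univ_sum_single (radialVec i c d)]
  rw [map_sum, Fintype.sum_eq_add_sum_compl i, Finset.smul_sum]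
  congr 1
  · rw [hsingle, radialVec, if_pos rfl]
  · refine Finset.sum_congr rfl fun j hj => ?_
    rw [Finset.mem_compl, Finset.mem_singleton] at hj
    rw [hsingle, radialVec, if_neg hj]

theorem HasDerivAt.radialVec {𝕜 : Type*} [NontriviallyNormedField 𝕜] [Fintype ι] {a b : 𝕜 → 𝕜}
    {a' b' x : 𝕜} (ha : HasDerivAt a a' x) (hb : HasDerivAt b b' x) (i : ι) :
    HasDerivAt (fun s => radialVec i (a s) (b s)) (radialVec i a' b') x := by
  refine hasDerivAt_pi.2 fun j => ?_
  by_cases hj : j = i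
  · simpa [_root_.radialVec, hj] using ha
  · simpa [_root_.radialVec, hj] using hb

end RadialVec

section Symmetric

variable {𝕜 ι F : Type*} [NontriviallyNormedField 𝕜] [CompleteSpace 𝕜] [Fintype ι]
  [NormedAddCommGroup F] [NormedSpace 𝕜 F] {Φ : (ι → 𝕜) → F}

theorem fderiv_comp_perm_apply_comp_perm {π : Equiv.Perm ι} (hπ : ∀ v, Φ (v ∘ π) = Φ v)
    (v w : ι → 𝕜) : fderiv 𝕜 Φ (v ∘ π) (w ∘ π) = fderiv 𝕜 Φ v w := by
  let L : (ι → 𝕜) ≃L[𝕜] (ι → 𝕜) := (LinearEquiv.funCongrLeft 𝕜 𝕜 π).toContinuousLinearEquiv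
  have hL : Φ ∘ L = Φ := funext hπ
  have := L.comp_right_fderiv (f := Φ) (x := v)
  rw [hL] at this
  exact (DFunLike.congr_fun this w).symm

variable [DecidableEq ι]

theorem fderiv_apply_single_eq_of_comp_swap (hsym : ∀ (π : Equiv.Perm ι) v, Φ (v ∘ π) = Φ v)
    {v : ι → 𝕜} {j k : ι} (hv : v ∘ Equiv.swap j k = v) :
    fderiv 𝕜 Φ v (Pi.single j 1) = fderiv 𝕜 Φ v (Pi.single k 1) := by
  rw [← fderiv_comp_perm_apply_comp_perm (hsym (Equiv.swap j k)), hv, Pi.single_comp_equiv,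
    Equiv.symm_swap, Equiv.swap_apply_left]

theorem fderiv_radialVec_apply_radialVec (hsym : ∀ (π : Equiv.Perm ι) v, Φ (v ∘ π) = Φ v)
    {i k : ι} (hk : k ≠ i) (a b c d : 𝕜) :
    fderiv 𝕜 Φ (radialVec i a b) (radialVec i c d) =
      c • fderiv 𝕜 Φ (radialVec i a b) (Pi.single i 1) +
        (((Fintype.card ι : 𝕜) - 1) * d) • fderiv 𝕜 Φ (radialVec i a b) (Pi.single k 1) := by
  have hoff : ∀ j ∈ ({i}ᶜ : Finset ι), fderiv 𝕜 Φ (radialVec i a b) (Pi.single j 1) =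
      fderiv 𝕜 Φ (radialVec i a b) (Pi.single k 1) := fun j hj =>
    fderiv_apply_single_eq_of_comp_swap hsym
      (radialVec_comp_swap (by simpa using hj) hk a b)
  have hcard : ((Fintype.card ι - 1 : ℕ) : 𝕜) = (Fintype.card ι : 𝕜) - 1 :=
    Nat.cast_pred (Fintype.card_pos_iff.2 ⟨i⟩)
  have hsplit := map_radialVec (fderiv 𝕜 Φ (radialVec i a b) : (ι → 𝕜) →ₗ[𝕜] F) i c d
  simp only [ContinuousLinearMap.coe_coe] at hsplit
  rw [hsplit, sum_congr rfl hoff, sum_const, card_compl, card_singleton,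
    ← Nat.cast_smul_eq_nsmul 𝕜, hcard, smul_smul, mul_comm d]

end Symmetric

/-- Here `F = Φ(φ', τ, …, τ)`, `p = φ'`, `t = τ`, `g = Φ₁` and `G = Φ₂(ρ)`. -/
theorem hasDerivAt_conservation_law {n : ℕ} (hn : 2 ≤ n) {F p t g : ℝ → ℝ} {p' t' G ρ : ℝ}
    (hF : HasDerivAt F (p' * g ρ + (n - 1) * t' * G) ρ) (hp : HasDerivAt p p' ρ)
    (ht : HasDerivAt t t' ρ) (ht' : t' * ρ = p ρ - t ρ)
    (heq : HasDerivAt (fun s => s ^ (n - 1) * g s) ((n - 1) * ρ ^ (n - 2) * G) ρ) :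
    HasDerivAt (fun s => s ^ n * (F s - (p s - t s) * g s)) (n * ρ ^ (n - 1) * F ρ) ρ := by
  obtain ⟨m, rfl⟩ : ∃ m, n = m + 2 := ⟨n - 2, by omega⟩
  simp only [Nat.add_sub_cancel, show m + 2 - 1 = m + 1 by omega] at heq ⊢
  have hregroup : (fun s => s ^ (m + 2) * (F s - (p s - t s) * g s)) =
      fun s => s ^ (m + 2) * F s - ((p s - t s) * s) * (s ^ (m + 1) * g s) := by
    funext s
    ring
  rw [hregroup]
  refine (((hasDerivAt_pow (m + 2) ρ).mul hF).sub
    (((hp.sub ht).mul (hasDerivAt_id ρ)).mul heq)).congr_deriv ?_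
  simp only [Pi.mul_apply, Pi.sub_apply, id, mul_one]
  push_cast
  linear_combination ((m + 1 : ℝ) * G + g ρ) * ρ ^ (m + 1) * ht'

/-- in the flat case `f(ρ) = ρ`, an equilibrium solution `φ` satisfies the
conservation law `d/dρ { ρⁿ [Φ(φ',τ,…,τ) - (φ' - τ) Φ₁] } = n ρ^{n-1} Φ(φ',τ,…,τ)`,
where `τ = φ/ρ`. -/
theorem stmt_13 (n : ℕ) (hn : 2 ≤ n)
    (Φ : (Fin n → ℝ) → ℝ) (hΦ : ContDiff ℝ 2 Φ)
    (hsym : ∀ (π : Equiv.Perm (Fin n)) (v : Fin n → ℝ), Φ (v ∘ π) = Φ v)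
    (φ φ' φ'' : ℝ → ℝ)
    (hφd : ∀ ρ ∈ Set.Ioc (0:ℝ) 1, HasDerivAt φ (φ' ρ) ρ)
    (hφd' : ∀ ρ ∈ Set.Ioc (0:ℝ) 1, HasDerivAt φ' (φ'' ρ) ρ)
    (τ : ℝ → ℝ) (hτ : ∀ ρ, τ ρ = φ ρ / ρ)
    (Φ₁ Φ₂ : ℝ → ℝ)
    (hΦ₁ : ∀ ρ, Φ₁ ρ = fderiv ℝ Φ
      (fun j => if j = (⟨0, by omega⟩ : Fin n) then φ' ρ else τ ρ)
      (Pi.single (⟨0, by omega⟩ : Fin n) 1))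
    (hΦ₂ : ∀ ρ, Φ₂ ρ = fderiv ℝ Φ
      (fun j => if j = (⟨0, by omega⟩ : Fin n) then φ' ρ else τ ρ)
      (Pi.single (⟨1, by omega⟩ : Fin n) 1))
    (heq : ∀ ρ ∈ Set.Ioc (0:ℝ) 1, HasDerivAt (fun s => s ^ (n - 1) * Φ₁ s)
      ((n - 1 : ℝ) * ρ ^ (n - 2) * Φ₂ ρ) ρ) :
    ∀ ρ ∈ Set.Ioc (0:ℝ) 1,
      HasDerivAt
        (fun s => s ^ n *
          (Φ (fun j => if j = (⟨0, by omega⟩ : Fin n) then φ' s else τ s) -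
            (φ' s - τ s) * Φ₁ s))
        ((n : ℝ) * ρ ^ (n - 1) *
          Φ (fun j => if j = (⟨0, by omega⟩ : Fin n) then φ' ρ else τ ρ)) ρ := by
  intro ρ hρ
  have hρ0 : ρ ≠ 0 := hρ.1.ne'
  have hτd : HasDerivAt τ ((φ' ρ - τ ρ) / ρ) ρ := by
    have h := (hφd ρ hρ).fun_div (hasDerivAt_id' ρ) hρ0
    rw [← funext hτ] at h
    refine h.congr_deriv ?_
    rw [hτ]
    field_simp
  have hF : HasDerivAt (fun s => Φ (radialVec ⟨0, by omega⟩ (φ' s) (τ s)))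
      (φ'' ρ * Φ₁ ρ + (n - 1) * ((φ' ρ - τ ρ) / ρ) * Φ₂ ρ) ρ := by
    have h := ((hΦ.differentiable two_ne_zero _).hasFDerivAt).comp_hasDerivAt ρ
      ((hφd' ρ hρ).radialVec hτd ⟨0, by omega⟩)
    rw [hΦ₁, hΦ₂]
    rwa [fderiv_radialVec_apply_radialVec hsym (k := ⟨1, by omega⟩) (by simp), Fintype.card_fin,
      smul_eq_mul, smul_eq_mul] at h
  exact hasDerivAt_conservation_law hn hF (hφd' ρ hρ) hτd (div_mul_cancel₀ _ hρ0) (heq ρ hρ)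
end

section
/- Let φ(v) = μ(v^α − n) + ν v^{−β} with μ > 0, ν ≥ 0, 1 < α, β ≥ 0. Then for s ≥ 1, sup_{v > t₀} φ'(v)/φ'(sv) = s^{1−α}, where t₀ ≥ 0 is defined by φ'(t₀) = 0 (t₀ = 0 if ν = 0). -/
/-!
Writing `φ'(v) = v^(α-1) (μα - νβ v^(-(α+β)))`, one finds
`s^(1-α) φ'(sv) = v^(α-1) (μα - s^(-(α+β)) νβ v^(-(α+β)))`, which dominates `φ'(v)` because
`s^(-(α+β)) ≤ 1`. Hence `φ'(v)/φ'(sv) ≤ s^(1-α)` wherever `φ'(sv) > 0`, and since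
`v^(-(α+β)) → 0` the ratio tends to `s^(1-α)` as `v → ∞`, so the bound is the supremum.
-/

open Filter Topology

noncomputable def derivPhi (μ ν α β v : ℝ) : ℝ :=
  μ * α * v ^ (α - 1) - ν * β * v ^ (-β - 1)

section derivPhi

variable {μ ν α β s v : ℝ}

theorem hasDerivAt_phi (c : ℝ) (hv : 0 < v) :
    HasDerivAt (fun x : ℝ => μ * (x ^ α - c) + ν * x ^ (-β)) (derivPhi μ ν α β v) v := by
  have hpow := Real.hasDerivAt_rpow_const (p := α) (Or.inl hv.ne')
  have hinv := Real.hasDerivAt_rpow_const (p := -β) (Or.inl hv.ne')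
  exact (((hpow.sub_const c).const_mul μ).add (hinv.const_mul ν)).congr_deriv
    (by rw [derivPhi]; ring)

theorem deriv_eq_derivPhi {φ : ℝ → ℝ} {c : ℝ}
    (hφ : ∀ x > (0 : ℝ), φ x = μ * (x ^ α - c) + ν * x ^ (-β)) (hv : 0 < v) :
    deriv φ v = derivPhi μ ν α β v := by
  have hloc : φ =ᶠ[𝓝 v] fun x => μ * (x ^ α - c) + ν * x ^ (-β) :=
    eventually_of_mem (Ioi_mem_nhds hv) hφ
  rw [hloc.deriv_eq, (hasDerivAt_phi c hv).deriv]

theorem derivPhi_mul (hs : 0 < s) (hv : 0 < v) :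
    derivPhi μ ν α β (s * v) =
      s ^ (α - 1) * v ^ (α - 1) * (μ * α - s ^ (-(α + β)) * (ν * β * v ^ (-(α + β)))) := by
  have hsplit : ∀ x : ℝ, 0 < x → x ^ (-β - 1) = x ^ (α - 1) * x ^ (-(α + β)) := fun x hx => by
    rw [← Real.rpow_add hx]
    ring_nf
  rw [derivPhi, hsplit _ (mul_pos hs hv), Real.mul_rpow hs.le hv.le, Real.mul_rpow hs.le hv.le]
  ring

theorem derivPhi_eq (hv : 0 < v) :
    derivPhi μ ν α β v = v ^ (α - 1) * (μ * α - ν * β * v ^ (-(α + β))) := by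
  simpa using derivPhi_mul (μ := μ) (ν := ν) (α := α) (β := β) one_pos hv

theorem derivPhi_le_rpow_mul_derivPhi_mul (hνβ : 0 ≤ ν * β) (hαβ : 0 ≤ α + β) (hs : 1 ≤ s)
    (hv : 0 < v) :
    derivPhi μ ν α β v ≤ s ^ (1 - α) * derivPhi μ ν α β (s * v) := by
  have hs0 : 0 < s := one_pos.trans_le hs
  have hcancel : s ^ (1 - α) * s ^ (α - 1) = 1 := by
    rw [← Real.rpow_add hs0]
    simp
  have hscale : s ^ (-(α + β)) ≤ 1 := Real.rpow_le_one_of_one_le_of_nonpos hs (by linarith)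
  have htail : 0 ≤ ν * β * v ^ (-(α + β)) := mul_nonneg hνβ (by positivity)
  calc derivPhi μ ν α β v = v ^ (α - 1) * (μ * α - ν * β * v ^ (-(α + β))) := derivPhi_eq hv
    _ ≤ v ^ (α - 1) * (μ * α - s ^ (-(α + β)) * (ν * β * v ^ (-(α + β)))) := by
        gcongr v ^ (α - 1) * (μ * α - ?_)
        exact mul_le_of_le_one_left htail hscale
    _ = s ^ (1 - α) * s ^ (α - 1) *
          (v ^ (α - 1) * (μ * α - s ^ (-(α + β)) * (ν * β * v ^ (-(α + β))))) := by
        rw [hcancel, one_mul]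
    _ = s ^ (1 - α) * derivPhi μ ν α β (s * v) := by
        rw [derivPhi_mul hs0 hv]
        ring

theorem tendsto_sub_mul_rpow_neg_atTop (a b c : ℝ) {γ : ℝ} (hγ : 0 < γ) :
    Tendsto (fun v : ℝ => a - c * (b * v ^ (-γ))) atTop (𝓝 a) := by
  have htail : Tendsto (fun v : ℝ => c * (b * v ^ (-γ))) atTop (𝓝 (c * (b * 0))) :=
    tendsto_const_nhds.mul (tendsto_const_nhds.mul (tendsto_rpow_neg_atTop hγ))
  simpa using tendsto_const_nhds.sub htail

theorem tendsto_derivPhi_div_derivPhi_mul (hμα : μ * α ≠ 0) (hαβ : 0 < α + β) (hs : 0 < s) :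
    Tendsto (fun v => derivPhi μ ν α β v / derivPhi μ ν α β (s * v)) atTop
      (𝓝 (s ^ (1 - α))) := by
  have hlim := (tendsto_sub_mul_rpow_neg_atTop (μ * α) (ν * β) 1 hαβ).div
    ((tendsto_sub_mul_rpow_neg_atTop (μ * α) (ν * β) (s ^ (-(α + β))) hαβ).const_mul (s ^ (α - 1)))
    (mul_ne_zero (by positivity) hμα)
  have hval : μ * α / (s ^ (α - 1) * (μ * α)) = s ^ (1 - α) := by
    rw [div_mul_cancel_right₀ hμα, ← Real.rpow_neg hs.le, neg_sub]
  rw [hval] at hlim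
  refine hlim.congr' ?_
  filter_upwards [eventually_gt_atTop 0] with v hv
  rw [Pi.div_apply, derivPhi_eq hv, derivPhi_mul hs hv, one_mul, mul_assoc (s ^ (α - 1)),
    mul_left_comm (s ^ (α - 1)), mul_div_mul_left _ _ (Real.rpow_pos_of_pos hv _).ne']

end derivPhi

theorem csSup_eq_of_forall_le_of_tendsto_atTop {f : ℝ → ℝ} {t₀ c : ℝ}
    (hle : ∀ v > t₀, f v ≤ c) (hlim : Tendsto f atTop (𝓝 c)) :
    sSup {r : ℝ | ∃ v > t₀, r = f v} = c := by
  refine IsLUB.csSup_eq ⟨?_, fun b hb => ?_⟩ ⟨f (t₀ + 1), t₀ + 1, by linarith, rfl⟩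
  · rintro r ⟨v, hv, rfl⟩
    exact hle v hv
  · refine le_of_tendsto hlim ?_
    filter_upwards [eventually_gt_atTop t₀] with v hv
    exact hb ⟨v, hv, rfl⟩

theorem stmt_14_general (n : ℕ) (μ ν α β : ℝ)
    (hμ : 0 < μ) (hν : 0 ≤ ν) (hα : 1 < α) (hβ : 0 ≤ β)
    (φ : ℝ → ℝ) (hφ : ∀ v > (0:ℝ), φ v = μ * (v ^ α - n) + ν * v ^ (-β))
    (t₀ : ℝ) (ht₀ : 0 ≤ t₀)
    (ht₀pos : ∀ v > t₀, 0 < deriv φ v)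
    (s : ℝ) (hs : 1 ≤ s) :
    sSup {r : ℝ | ∃ v > t₀, r = deriv φ v / deriv φ (s * v)} = s ^ (1 - α) := by
  have hs0 : 0 < s := one_pos.trans_le hs
  have hmul : ∀ v > t₀, t₀ < s * v := fun v hv => by nlinarith
  have hderiv : ∀ v > t₀, deriv φ v = derivPhi μ ν α β v := fun v hv =>
    deriv_eq_derivPhi hφ (ht₀.trans_lt hv)
  apply csSup_eq_of_forall_le_of_tendsto_atTop
  · intro v hv
    rw [div_le_iff₀ (ht₀pos _ (hmul v hv)), hderiv v hv, hderiv _ (hmul v hv)]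
    exact derivPhi_le_rpow_mul_derivPhi_mul (by positivity) (by linarith) hs (ht₀.trans_lt hv)
  · refine (tendsto_derivPhi_div_derivPhi_mul (ν := ν) (β := β) (by positivity) (by linarith)
      hs0).congr' ?_
    filter_upwards [eventually_gt_atTop t₀] with v hv
    rw [hderiv v hv, hderiv _ (hmul v hv)]

/-- for `φ(v) = μ(v^α - n) + ν v^{-β}` with `μ > 0`, `ν ≥ 0`, `α > 1`,
`β ≥ 0`, and `t₀ ≥ 0` the zero of `φ'` (with `t₀ = 0` if `φ'` has no zero), one has for
each `s ≥ 1`: `sup_{v > t₀} φ'(v)/φ'(sv) = s^{1-α}`. -/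
theorem stmt_14 (n : ℕ) (hn : 2 ≤ n) (μ ν α β : ℝ)
    (hμ : 0 < μ) (hν : 0 ≤ ν) (hα : 1 < α) (hβ : 0 ≤ β)
    (φ : ℝ → ℝ) (hφ : ∀ v > (0:ℝ), φ v = μ * (v ^ α - n) + ν * v ^ (-β))
    (t₀ : ℝ) (ht₀ : 0 ≤ t₀)
    (ht₀pos : ∀ v > t₀, 0 < deriv φ v)
    (ht₀zero : t₀ = 0 ∨ deriv φ t₀ = 0)
    (s : ℝ) (hs : 1 ≤ s) :
    sSup {r : ℝ | ∃ v > t₀, r = deriv φ v / deriv φ (s * v)} = s ^ (1 - α) :=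
  stmt_14_general n μ ν α β hμ hν hα hβ φ hφ t₀ ht₀ ht₀pos s hs
end

section
/- Let f satisfy μ₀ ≤ f' ≤ μ₁ and μ₀ρ ≤ f(ρ) ≤ μ₁ρ for 0 < μ₀ ≤ μ₁. If φ ∈ C¹(0,1] is positive increasing with φ(1) = λ and satisfies η₀ τ(ρ) ≤ φ'(ρ) ≤ η₁ τ(ρ) where τ = f(φ)/f and 0 < η₀ ≤ η₁, then λ ρ^{c₁} ≤ φ(ρ) ≤ λ ρ^{c₀} for ρ ∈ (0,1], where c₀ = η₀ μ₀/μ₁ and c₁ = η₁ μ₁/μ₀. -/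
/-!
The two-sided bound on `φ'` together with `μ₀ ρ ≤ f ρ ≤ μ₁ ρ` gives the Euler-type differential
inequalities `c₀ φ(ρ) ≤ ρ φ'(ρ) ≤ c₁ φ(ρ)`. Equivalently `ρ ↦ φ(ρ) ρ^{-c₁}` is nonincreasing and
`ρ ↦ φ(ρ) ρ^{-c₀}` is nondecreasing, and comparing their values at `ρ` and at `1` gives the bounds.
-/

open Set

theorem hasDerivAt_mul_rpow_neg {φ : ℝ → ℝ} {d c x : ℝ} (hx : 0 < x) (hφ : HasDerivAt φ d x) :
    HasDerivAt (fun y => φ y * y ^ (-c)) (x ^ (-c - 1) * (d * x - c * φ x)) x := by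
  refine (hφ.mul (Real.hasDerivAt_rpow_const (p := -c) (Or.inl hx.ne'))).congr_deriv ?_
  rw [Real.rpow_sub_one hx.ne']
  field_simp
  ring

theorem mul_rpow_le_mul_rpow_of_deriv_mul_le {φ φ' : ℝ → ℝ} {a b c : ℝ} (ha : 0 < a)
    (hab : a ≤ b) (hφ : ∀ x ∈ Icc a b, HasDerivAt φ (φ' x) x)
    (h : ∀ x ∈ Ioo a b, φ' x * x ≤ c * φ x) :
    φ b * a ^ c ≤ φ a * b ^ c := by
  have hpos : ∀ x ∈ Icc a b, 0 < x := fun x hx => ha.trans_le hx.1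
  have hanti : AntitoneOn (fun x => φ x * x ^ (-c)) (Icc a b) := by
    refine antitoneOn_of_hasDerivWithinAt_nonpos (convex_Icc a b)
      (f' := fun x => x ^ (-c - 1) * (φ' x * x - c * φ x))
      (fun x hx => (hasDerivAt_mul_rpow_neg (hpos x hx) (hφ x hx)).continuousAt.continuousWithinAt)
      (fun x hx => ?_) (fun x hx => ?_) <;> rw [interior_Icc] at hx
    · exact (hasDerivAt_mul_rpow_neg (hpos x (Ioo_subset_Icc_self hx))
        (hφ x (Ioo_subset_Icc_self hx))).hasDerivWithinAt
    · exact mul_nonpos_of_nonneg_of_nonpos (by have := ha.trans hx.1; positivity)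
        (sub_nonpos.2 (h x hx))
  have hb : 0 < b := ha.trans_le hab
  have hba := hanti ⟨le_rfl, hab⟩ ⟨hab, le_rfl⟩ hab
  simp only [Real.rpow_neg ha.le, Real.rpow_neg hb.le, ← div_eq_mul_inv] at hba
  rwa [div_le_div_iff₀ (by positivity) (by positivity)] at hba

theorem mul_rpow_le_mul_rpow_of_mul_le_deriv {φ φ' : ℝ → ℝ} {a b c : ℝ} (ha : 0 < a)
    (hab : a ≤ b) (hφ : ∀ x ∈ Icc a b, HasDerivAt φ (φ' x) x)
    (h : ∀ x ∈ Ioo a b, c * φ x ≤ φ' x * x) :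
    φ a * b ^ c ≤ φ b * a ^ c := by
  have := mul_rpow_le_mul_rpow_of_deriv_mul_le (φ := -φ) (φ' := -φ') ha hab
    (fun x hx => (hφ x hx).neg) (fun x hx => by simpa using h x hx)
  simpa using this

theorem div_mem_Icc_of_linear_bounds {f : ℝ → ℝ} {μ₀ μ₁ : ℝ} (hμ₀ : 0 < μ₀)
    (hfb : ∀ ρ ≥ (0:ℝ), μ₀ * ρ ≤ f ρ ∧ f ρ ≤ μ₁ * ρ) {x y : ℝ} (hx : 0 < x) (hy : 0 ≤ y) :
    μ₀ / μ₁ * (y / x) ≤ f y / f x ∧ f y / f x ≤ μ₁ / μ₀ * (y / x) := by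
  obtain ⟨hx₀, hx₁⟩ := hfb x hx.le
  obtain ⟨hy₀, hy₁⟩ := hfb y hy
  have hfx : 0 < f x := (mul_pos hμ₀ hx).trans_le hx₀
  have hμ₁ : 0 < μ₁ := pos_of_mul_pos_left (hfx.trans_le hx₁) hx.le
  rw [div_mul_div_comm, div_mul_div_comm]
  exact ⟨div_le_div₀ ((mul_nonneg hμ₀.le hy).trans hy₀) hy₀ hfx hx₁,
    div_le_div₀ (by positivity) hy₁ (by positivity) hx₀⟩

theorem stmt_17_general (f : ℝ → ℝ) (μ₀ μ₁ : ℝ) (hμ₀ : 0 < μ₀)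
    (hfb : ∀ ρ ≥ (0:ℝ), μ₀ * ρ ≤ f ρ ∧ f ρ ≤ μ₁ * ρ)
    (lam : ℝ) (η₀ η₁ : ℝ) (hη₀ : 0 < η₀) (hη : η₀ ≤ η₁)
    (φ φ' : ℝ → ℝ)
    (hφpos : ∀ ρ ∈ Set.Ioc (0:ℝ) 1, 0 < φ ρ)
    (hφd : ∀ ρ ∈ Set.Ioc (0:ℝ) 1, HasDerivAt φ (φ' ρ) ρ)
    (hφ1 : φ 1 = lam)
    (hφ'b : ∀ ρ ∈ Set.Ioc (0:ℝ) 1,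
      η₀ * (f (φ ρ) / f ρ) ≤ φ' ρ ∧ φ' ρ ≤ η₁ * (f (φ ρ) / f ρ)) :
    ∀ ρ ∈ Set.Ioc (0:ℝ) 1,
      lam * ρ ^ (η₁ * μ₁ / μ₀) ≤ φ ρ ∧ φ ρ ≤ lam * ρ ^ (η₀ * μ₀ / μ₁) := by
  have hEuler : ∀ x ∈ Ioc (0:ℝ) 1,
      η₀ * μ₀ / μ₁ * φ x ≤ φ' x * x ∧ φ' x * x ≤ η₁ * μ₁ / μ₀ * φ x := by
    intro x hx
    obtain ⟨hτ₀, hτ₁⟩ := div_mem_Icc_of_linear_bounds hμ₀ hfb hx.1 (hφpos x hx).le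
    obtain ⟨hφ'₀, hφ'₁⟩ := hφ'b x hx
    have hx₀ : x ≠ 0 := hx.1.ne'
    constructor
    · calc η₀ * μ₀ / μ₁ * φ x = η₀ * (μ₀ / μ₁ * (φ x / x)) * x := by field_simp
        _ ≤ φ' x * x := by gcongr; exacts [hx.1.le, hφ'₀.trans' (by gcongr)]
    · calc φ' x * x ≤ η₁ * (μ₁ / μ₀ * (φ x / x)) * x := by
            gcongr; exacts [hx.1.le, hφ'₁.trans (by gcongr; linarith)]
        _ = η₁ * μ₁ / μ₀ * φ x := by field_simp
  intro ρ hρ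
  have hsub : Icc ρ 1 ⊆ Ioc 0 1 := fun x hx => ⟨hρ.1.trans_le hx.1, hx.2⟩
  have hφd' : ∀ x ∈ Icc ρ 1, HasDerivAt φ (φ' x) x := fun x hx => hφd x (hsub hx)
  have hE : ∀ x ∈ Ioo ρ 1, _ := fun x hx => hEuler x (hsub (Ioo_subset_Icc_self hx))
  constructor
  · simpa [hφ1] using mul_rpow_le_mul_rpow_of_deriv_mul_le hρ.1 hρ.2 hφd' fun x hx => (hE x hx).2
  · simpa [hφ1] using mul_rpow_le_mul_rpow_of_mul_le_deriv hρ.1 hρ.2 hφd' fun x hx => (hE x hx).1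

/-- if `μ₀ ≤ f' ≤ μ₁`, `μ₀ρ ≤ f(ρ) ≤ μ₁ρ` and the positive increasing
`φ ∈ C¹(0,1]` with `φ(1) = λ` satisfies `η₀ τ ≤ φ' ≤ η₁ τ` where `τ = f(φ)/f`, then
`λ ρ^{c₁} ≤ φ(ρ) ≤ λ ρ^{c₀}` on `(0,1]` with `c₀ = η₀μ₀/μ₁`, `c₁ = η₁μ₁/μ₀`. -/
theorem stmt_17 (f : ℝ → ℝ) (μ₀ μ₁ : ℝ) (hμ₀ : 0 < μ₀) (hμ : μ₀ ≤ μ₁)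
    (hf : ContDiff ℝ 1 f)
    (hf' : ∀ ρ ≥ (0:ℝ), μ₀ ≤ deriv f ρ ∧ deriv f ρ ≤ μ₁)
    (hfb : ∀ ρ ≥ (0:ℝ), μ₀ * ρ ≤ f ρ ∧ f ρ ≤ μ₁ * ρ)
    (lam : ℝ) (hlam : 0 < lam) (η₀ η₁ : ℝ) (hη₀ : 0 < η₀) (hη : η₀ ≤ η₁)
    (φ φ' : ℝ → ℝ)
    (hφpos : ∀ ρ ∈ Set.Ioc (0:ℝ) 1, 0 < φ ρ)
    (hφd : ∀ ρ ∈ Set.Ioc (0:ℝ) 1, HasDerivAt φ (φ' ρ) ρ)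
    (hφ1 : φ 1 = lam)
    (hφ'b : ∀ ρ ∈ Set.Ioc (0:ℝ) 1,
      η₀ * (f (φ ρ) / f ρ) ≤ φ' ρ ∧ φ' ρ ≤ η₁ * (f (φ ρ) / f ρ)) :
    ∀ ρ ∈ Set.Ioc (0:ℝ) 1,
      lam * ρ ^ (η₁ * μ₁ / μ₀) ≤ φ ρ ∧ φ ρ ≤ lam * ρ ^ (η₀ * μ₀ / μ₁) :=
  stmt_17_general f μ₀ μ₁ hμ₀ hfb lam η₀ η₁ hη₀ hη φ φ' hφpos hφd hφ1 hφ'b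
end

section
/- Let ψ(s) = a log(1+s²) with 0 < a ≤ 1/√2 and define ζ(t) by t = ∫₀^{ζ(t)} √(1+ψ'(s)²) ds and κ(t) = ψ'(ζ(t))ψ''(ζ(t)) / [ζ(t)(1+ψ'(ζ(t))²)²]. Then ∫₀^∞ t κ₊(t) dt ≤ 1, where κ₊ = max{κ,0}. In fact ∫₀^∞ t κ₊(t) dt ≤ 2a². -/
/-!
Write `p = ψ'`, `q = ψ''` and `G` for the arclength along the profile, so that `ζ = G⁻¹`.
The curvature has the sign of `p q`, which is nonnegative on `[0, 1]` and nonpositive beyond,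
so substituting `t = G x` turns `∫ t κ₊(t) dt` into `∫₀¹ G'(x) G(x) p q / (x (1 + p²)²) dx`.
As `p²` increases on `[0, 1]`, `G x ≤ x G'(x)` and `G'² = 1 + p²`, so the integrand is at most
`p q = (p²/2)'`, whose integral over `[0, 1]` is `p(1)²/2 = a²/2 ≤ 1/4`.
-/

open MeasureTheory Set Real

noncomputable section

/-- Arclength of the graph of a function whose derivative is `p`. -/
def arclength (p : ℝ → ℝ) (z : ℝ) : ℝ := ∫ s in (0:ℝ)..z, √(1 + p s ^ 2)

/-- The paper's `κ` at radius `r` (rather than at geodesic distance `t = G r`), for `p = ψ'`,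
`q = ψ''`. -/
def revolutionCurvature (p q : ℝ → ℝ) (r : ℝ) : ℝ := p r * q r / (r * (1 + p r ^ 2) ^ 2)

end

section Arclength

variable {p : ℝ → ℝ}

theorem continuous_sqrt_one_add_sq (hp : Continuous p) : Continuous fun s => √(1 + p s ^ 2) := by
  fun_prop

theorem hasDerivAt_arclength (hp : Continuous p) (z : ℝ) :
    HasDerivAt (arclength p) (√(1 + p z ^ 2)) z :=
  ((continuous_sqrt_one_add_sq hp).integral_hasStrictDerivAt 0 z).hasDerivAt

theorem continuous_arclength (hp : Continuous p) : Continuous (arclength p) :=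
  continuous_iff_continuousAt.2 fun z => (hasDerivAt_arclength hp z).continuousAt

theorem strictMono_arclength (hp : Continuous p) : StrictMono (arclength p) :=
  strictMono_of_hasDerivAt_pos (hasDerivAt_arclength hp) fun _ => by positivity

@[simp]
theorem arclength_zero : arclength p 0 = 0 :=
  intervalIntegral.integral_same

theorem le_arclength (hp : Continuous p) {z : ℝ} (hz : 0 ≤ z) : z ≤ arclength p z := by
  have h := intervalIntegral.integral_mono_on hz (intervalIntegrable_const (μ := volume))
    ((continuous_sqrt_one_add_sq hp).intervalIntegrable 0 z)
    fun s _ => one_le_sqrt.2 (le_add_of_nonneg_right (sq_nonneg (p s)))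
  simpa [arclength] using h

theorem arclength_le_of_sq_le (hp : Continuous p) {z : ℝ} (hz : 0 ≤ z)
    (h : ∀ s ∈ Icc 0 z, p s ^ 2 ≤ p z ^ 2) : arclength p z ≤ z * √(1 + p z ^ 2) := by
  have h := intervalIntegral.integral_mono_on hz
    ((continuous_sqrt_one_add_sq hp).intervalIntegrable 0 z)
    (intervalIntegrable_const (μ := volume))
    fun s hs => sqrt_le_sqrt (by linarith [h s hs] : 1 + p s ^ 2 ≤ 1 + p z ^ 2)
  simpa [arclength, mul_comm] using h

theorem image_arclength_Ioo (hp : Continuous p) (b : ℝ) :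
    arclength p '' Ioo 0 b = Ioo 0 (arclength p b) := by
  simpa using
    (continuous_arclength hp).image_Ioo_of_strictMono (strictMono_arclength hp) (a := 0) (b := b)

theorem integrableOn_Ioo_arclength_iff (hp : Continuous p) (f : ℝ → ℝ) (b : ℝ) :
    IntegrableOn f (Ioo 0 (arclength p b)) ↔
      IntegrableOn (fun x => √(1 + p x ^ 2) * f (arclength p x)) (Ioo 0 b) := by
  simpa [← image_arclength_Ioo hp, abs_of_nonneg (sqrt_nonneg _)] using
    integrableOn_image_iff_integrableOn_abs_deriv_smul measurableSet_Ioo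
      (fun x _ => (hasDerivAt_arclength hp x).hasDerivWithinAt)
      (strictMono_arclength hp).injective.injOn f

theorem setIntegral_Ioo_arclength (hp : Continuous p) (f : ℝ → ℝ) (b : ℝ) :
    ∫ t in Ioo 0 (arclength p b), f t =
      ∫ x in Ioo 0 b, √(1 + p x ^ 2) * f (arclength p x) := by
  simpa [← image_arclength_Ioo hp, abs_of_nonneg (sqrt_nonneg _)] using
    integral_image_eq_integral_abs_deriv_smul measurableSet_Ioo
      (fun x _ => (hasDerivAt_arclength hp x).hasDerivWithinAt)
      (strictMono_arclength hp).injective.injOn f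

end Arclength

section Curvature

variable {p q : ℝ → ℝ}

theorem revolutionCurvature_nonneg {r : ℝ} (hr : 0 ≤ r) (h : 0 ≤ p r * q r) :
    0 ≤ revolutionCurvature p q r :=
  div_nonneg h (by positivity)

theorem revolutionCurvature_nonpos {r : ℝ} (hr : 0 ≤ r) (h : p r * q r ≤ 0) :
    revolutionCurvature p q r ≤ 0 :=
  div_nonpos_of_nonpos_of_nonneg h (by positivity)

theorem continuousOn_revolutionCurvature (hp : Continuous p) (hq : Continuous q) :
    ContinuousOn (revolutionCurvature p q) (Ioi 0) :=
  ContinuousOn.div (by fun_prop) (by fun_prop) fun r hr => (mul_pos hr (by positivity)).ne'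

theorem sqrt_mul_arclength_mul_revolutionCurvature_le (hp : Continuous p) {r : ℝ} (hr : 0 < r)
    (hpq : 0 ≤ p r * q r) (hsq : ∀ s ∈ Icc 0 r, p s ^ 2 ≤ p r ^ 2) :
    √(1 + p r ^ 2) * (arclength p r * revolutionCurvature p q r) ≤ p r * q r := by
  have hg : √(1 + p r ^ 2) ^ 2 = 1 + p r ^ 2 := sq_sqrt (by positivity)
  have hG : √(1 + p r ^ 2) * arclength p r ≤ r * (1 + p r ^ 2) ^ 2 := calc
    √(1 + p r ^ 2) * arclength p r ≤ √(1 + p r ^ 2) * (r * √(1 + p r ^ 2)) :=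
      mul_le_mul_of_nonneg_left (arclength_le_of_sq_le hp hr.le hsq) (sqrt_nonneg _)
    _ = r * √(1 + p r ^ 2) ^ 2 := by ring
    _ = r * (1 + p r ^ 2) := by rw [hg]
    _ ≤ r * (1 + p r ^ 2) ^ 2 := by
      gcongr
      exact le_self_pow₀ (le_add_of_nonneg_right (sq_nonneg _)) two_ne_zero
  rw [revolutionCurvature, ← mul_assoc, mul_div_assoc', div_le_iff₀ (by positivity)]
  calc √(1 + p r ^ 2) * arclength p r * (p r * q r)
      ≤ r * (1 + p r ^ 2) ^ 2 * (p r * q r) := mul_le_mul_of_nonneg_right hG hpq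
    _ = p r * q r * (r * (1 + p r ^ 2) ^ 2) := by ring

theorem monotoneOn_sq_of_mul_deriv_nonneg (hp : ∀ s, HasDerivAt p (q s) s) {s : Set ℝ}
    (hs : Convex ℝ s) (hpq : ∀ x ∈ s, 0 ≤ p x * q x) : MonotoneOn (fun x => p x ^ 2) s :=
  monotoneOn_of_hasDerivWithinAt_nonneg hs
    (fun x _ => ((hp x).continuousAt.pow 2).continuousWithinAt)
    (fun x _ => (((hp x).pow 2).congr_deriv (by ring) :
      HasDerivAt _ (2 * (p x * q x)) x).hasDerivWithinAt)
    fun x hx => mul_nonneg zero_le_two (hpq x (interior_subset hx))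

theorem integral_mul_deriv_self (hp : ∀ s, HasDerivAt p (q s) s) (hq : Continuous q) (a b : ℝ) :
    ∫ x in a..b, p x * q x = (p b ^ 2 - p a ^ 2) / 2 := by
  have hp' : Continuous p := continuous_iff_continuousAt.2 fun x => (hp x).continuousAt
  rw [intervalIntegral.integral_eq_sub_of_hasDerivAt (f := fun x => p x ^ 2 / 2)
    (f' := fun x => p x * q x)
    (fun x _ => (((hp x).pow 2).div_const 2).congr_deriv (by ring))
    ((hp'.mul hq).intervalIntegrable a b)]
  ring

end Curvature

section CurvatureIntegral

variable {p q ζ κ : ℝ → ℝ} {b : ℝ}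

theorem mul_max_curvature_eq_zero (hp : Continuous p) (hb : 0 < b)
    (hneg : ∀ s, b ≤ s → p s * q s ≤ 0) (hζ : ∀ t, 0 ≤ t → arclength p (ζ t) = t)
    (hκ : ∀ t, 0 < t → κ t = revolutionCurvature p q (ζ t)) {t : ℝ} (ht : arclength p b ≤ t) :
    t * max (κ t) 0 = 0 := by
  have ht0 : 0 < t := lt_of_lt_of_le (by simpa using strictMono_arclength hp hb) ht
  have hbζ : b ≤ ζ t := (strictMono_arclength hp).le_iff_le.1 (by rwa [hζ t ht0.le])
  rw [hκ t ht0, max_eq_right (revolutionCurvature_nonpos (hb.le.trans hbζ) (hneg _ hbζ)), mul_zero]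

theorem max_curvature_arclength (hp : Continuous p) (hpos : ∀ s ∈ Icc 0 b, 0 ≤ p s * q s)
    (hζ : ∀ t, 0 ≤ t → arclength p (ζ t) = t)
    (hκ : ∀ t, 0 < t → κ t = revolutionCurvature p q (ζ t)) {x : ℝ} (hx : x ∈ Ioo 0 b) :
    max (κ (arclength p x)) 0 = revolutionCurvature p q x := by
  have hGx : 0 < arclength p x := hx.1.trans_le (le_arclength hp hx.1.le)
  have hζx : ζ (arclength p x) = x := (strictMono_arclength hp).injective (hζ _ hGx.le)
  rw [hκ _ hGx, hζx,
    max_eq_left (revolutionCurvature_nonneg hx.1.le (hpos x (Ioo_subset_Icc_self hx)))]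

theorem sqrt_mul_arclength_mul_revolutionCurvature_mem_Icc (hp : ∀ s, HasDerivAt p (q s) s)
    (hpos : ∀ s ∈ Icc 0 b, 0 ≤ p s * q s) {x : ℝ} (hx : x ∈ Ioo 0 b) :
    √(1 + p x ^ 2) * (arclength p x * revolutionCurvature p q x) ∈ Icc 0 (p x * q x) := by
  have hpc : Continuous p := continuous_iff_continuousAt.2 fun x => (hp x).continuousAt
  have hpqx := hpos x (Ioo_subset_Icc_self hx)
  have hsq := monotoneOn_sq_of_mul_deriv_nonneg hp (convex_Icc 0 b) hpos
  refine ⟨mul_nonneg (sqrt_nonneg _) (mul_nonneg (hx.1.le.trans (le_arclength hpc hx.1.le))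
    (revolutionCurvature_nonneg hx.1.le hpqx)), ?_⟩
  exact sqrt_mul_arclength_mul_revolutionCurvature_le hpc hx.1 hpqx fun s hs =>
    hsq ⟨hs.1, hs.2.trans hx.2.le⟩ (Ioo_subset_Icc_self hx) hs.2

theorem integrableOn_sqrt_mul_arclength_mul_revolutionCurvature
    (hp : ∀ s, HasDerivAt p (q s) s) (hq : Continuous q) (hpos : ∀ s ∈ Icc 0 b, 0 ≤ p s * q s) :
    IntegrableOn (fun x => √(1 + p x ^ 2) * (arclength p x * revolutionCurvature p q x))
      (Ioo 0 b) := by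
  have hpc : Continuous p := continuous_iff_continuousAt.2 fun x => (hp x).continuousAt
  refine ((hpc.mul hq).integrableOn_Icc.mono_set Ioo_subset_Icc_self).mono'
    (ContinuousOn.aestronglyMeasurable ?_ measurableSet_Ioo) ?_
  · exact (continuous_sqrt_one_add_sq hpc).continuousOn.mul
      ((continuous_arclength hpc).continuousOn.mul
        ((continuousOn_revolutionCurvature hpc hq).mono fun x hx => hx.1))
  · filter_upwards [ae_restrict_mem measurableSet_Ioo] with x hx
    have hE := sqrt_mul_arclength_mul_revolutionCurvature_mem_Icc hp hpos hx
    rw [norm_of_nonneg hE.1]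
    exact hE.2

theorem integrableOn_and_integral_le_of_curvature_sign (hp : ∀ s, HasDerivAt p (q s) s)
    (hq : Continuous q) (hb : 0 < b) (hpos : ∀ s ∈ Icc 0 b, 0 ≤ p s * q s)
    (hneg : ∀ s, b ≤ s → p s * q s ≤ 0) (hζ : ∀ t, 0 ≤ t → arclength p (ζ t) = t)
    (hκ : ∀ t, 0 < t → κ t = revolutionCurvature p q (ζ t)) :
    IntegrableOn (fun t => t * max (κ t) 0) (Ioi 0) ∧
      ∫ t in Ioi 0, t * max (κ t) 0 ≤ (p b ^ 2 - p 0 ^ 2) / 2 := by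
  have hpc : Continuous p := continuous_iff_continuousAt.2 fun x => (hp x).continuousAt
  have hsubst : EqOn (fun x => √(1 + p x ^ 2) * (arclength p x * max (κ (arclength p x)) 0))
      (fun x => √(1 + p x ^ 2) * (arclength p x * revolutionCurvature p q x)) (Ioo 0 b) :=
    fun x hx => by simp only [max_curvature_arclength hpc hpos hζ hκ hx]
  have hEint := integrableOn_sqrt_mul_arclength_mul_revolutionCurvature hp hq hpos
  have hvanish : ∀ t ∈ Ioi 0 \ Ioo 0 (arclength p b), t * max (κ t) 0 = 0 := fun t ht =>
    mul_max_curvature_eq_zero hpc hb hneg hζ hκ (not_lt.1 fun h => ht.2 ⟨ht.1, h⟩)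
  have hFint : IntegrableOn (fun t => t * max (κ t) 0) (Ioo 0 (arclength p b)) :=
    (integrableOn_Ioo_arclength_iff hpc _ b).2 (hEint.congr_fun hsubst.symm measurableSet_Ioo)
  refine ⟨hFint.of_forall_sdiff_eq_zero measurableSet_Ioi hvanish, ?_⟩
  calc ∫ t in Ioi 0, t * max (κ t) 0
      = ∫ t in Ioo 0 (arclength p b), t * max (κ t) 0 :=
        setIntegral_eq_of_subset_of_forall_sdiff_eq_zero measurableSet_Ioi Ioo_subset_Ioi_self
          hvanish
    _ = ∫ x in Ioo 0 b, √(1 + p x ^ 2) * (arclength p x * revolutionCurvature p q x) :=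
        (setIntegral_Ioo_arclength hpc _ b).trans (setIntegral_congr_fun measurableSet_Ioo hsubst)
    _ ≤ ∫ x in Ioo 0 b, p x * q x :=
        setIntegral_mono_on hEint ((hpc.mul hq).integrableOn_Icc.mono_set Ioo_subset_Icc_self)
          measurableSet_Ioo fun x hx =>
            (sqrt_mul_arclength_mul_revolutionCurvature_mem_Icc hp hpos hx).2
    _ = (p b ^ 2 - p 0 ^ 2) / 2 := by
        rw [← integral_Ioc_eq_integral_Ioo, ← intervalIntegral.integral_of_le hb.le,
          integral_mul_deriv_self hp hq]

end CurvatureIntegral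

section LogProfile

variable (a : ℝ)

theorem hasDerivAt_mul_log_one_add_sq (s : ℝ) :
    HasDerivAt (fun s => a * log (1 + s ^ 2)) (2 * a * s / (1 + s ^ 2)) s :=
  ((((hasDerivAt_pow 2 s).const_add 1).log (by positivity)).const_mul a).congr_deriv (by
    field_simp
    ring)

theorem hasDerivAt_mul_div_one_add_sq (s : ℝ) :
    HasDerivAt (fun s => 2 * a * s / (1 + s ^ 2)) (2 * a * (1 - s ^ 2) / (1 + s ^ 2) ^ 2) s := by
  have h := ((hasDerivAt_id' s).const_mul (2 * a)).fun_div ((hasDerivAt_pow 2 s).const_add 1)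
    (by positivity)
  exact h.congr_deriv (by
    field_simp
    ring)

end LogProfile

theorem stmt_18_general (a : ℝ) (ha : 0 < a) (ha' : a ≤ 1 / Real.sqrt 2)
    (ψ : ℝ → ℝ) (hψ : ∀ s, ψ s = a * Real.log (1 + s ^ 2))
    (ζ : ℝ → ℝ)
    (hζ : ∀ t ≥ (0:ℝ), t = ∫ s in (0:ℝ)..(ζ t), Real.sqrt (1 + deriv ψ s ^ 2))
    (κ : ℝ → ℝ)
    (hκ : ∀ t > (0:ℝ), κ t = deriv ψ (ζ t) * deriv (deriv ψ) (ζ t) /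
      (ζ t * (1 + deriv ψ (ζ t) ^ 2) ^ 2)) :
    MeasureTheory.IntegrableOn (fun t => t * max (κ t) 0) (Set.Ioi 0) ∧
      (∫ t in Set.Ioi (0:ℝ), t * max (κ t) 0) ≤ 2 * a ^ 2 ∧
      (∫ t in Set.Ioi (0:ℝ), t * max (κ t) 0) ≤ 1 := by
  obtain rfl : ψ = fun s => a * log (1 + s ^ 2) := funext hψ
  have hψ' : deriv (fun s => a * log (1 + s ^ 2)) = fun s => 2 * a * s / (1 + s ^ 2) :=
    funext fun s => (hasDerivAt_mul_log_one_add_sq a s).deriv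
  have hψ'' : deriv (fun s => 2 * a * s / (1 + s ^ 2)) =
      fun s => 2 * a * (1 - s ^ 2) / (1 + s ^ 2) ^ 2 :=
    funext fun s => (hasDerivAt_mul_div_one_add_sq a s).deriv
  rw [hψ'] at hζ hκ
  rw [hψ''] at hκ
  have hpq (s : ℝ) : 2 * a * s / (1 + s ^ 2) * (2 * a * (1 - s ^ 2) / (1 + s ^ 2) ^ 2) =
      4 * a ^ 2 * s * (1 - s ^ 2) / (1 + s ^ 2) ^ 3 := by
    field_simp
    ring
  obtain ⟨hint, hle⟩ := integrableOn_and_integral_le_of_curvature_sign (ζ := ζ) (κ := κ)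
    (hasDerivAt_mul_div_one_add_sq a)
    (Continuous.div (by fun_prop) (by fun_prop) fun s => by positivity) one_pos
    (fun s hs => by
      rw [hpq]
      exact div_nonneg (mul_nonneg (mul_nonneg (by positivity) hs.1) (by nlinarith [hs.1, hs.2]))
        (by positivity))
    (fun s hs => by
      rw [hpq]
      exact div_nonpos_of_nonpos_of_nonneg
        (mul_nonpos_of_nonneg_of_nonpos (by positivity) (by nlinarith)) (by positivity))
    (fun t ht => (hζ t ht).symm) hκ
  have hbound : (∫ t in Ioi (0:ℝ), t * max (κ t) 0) ≤ a ^ 2 / 2 := hle.trans_eq (by norm_num)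
  have ha2 : a ^ 2 ≤ 1 / 2 := by
    simpa [div_pow] using pow_le_pow_left₀ ha.le ha' 2
  exact ⟨hint, by linarith [sq_nonneg a], by linarith⟩

/-- for `ψ(s) = a log(1+s²)` with `0 < a ≤ 1/√2`, the radial (Gaussian)
curvature `κ(t) = ψ'(ζ(t))ψ''(ζ(t)) / (ζ(t)(1+ψ'(ζ(t))²)²)` of the surface of revolution,
where `t = ∫₀^{ζ(t)} √(1+ψ'(s)²) ds`, satisfies `∫₀^∞ t κ₊(t) dt ≤ 2a² ≤ 1`. -/
theorem stmt_18 (a : ℝ) (ha : 0 < a) (ha' : a ≤ 1 / Real.sqrt 2)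
    (ψ : ℝ → ℝ) (hψ : ∀ s, ψ s = a * Real.log (1 + s ^ 2))
    (ζ : ℝ → ℝ) (hζnn : ∀ t ≥ (0:ℝ), 0 ≤ ζ t)
    (hζ : ∀ t ≥ (0:ℝ), t = ∫ s in (0:ℝ)..(ζ t), Real.sqrt (1 + deriv ψ s ^ 2))
    (κ : ℝ → ℝ)
    (hκ : ∀ t > (0:ℝ), κ t = deriv ψ (ζ t) * deriv (deriv ψ) (ζ t) /
      (ζ t * (1 + deriv ψ (ζ t) ^ 2) ^ 2)) :
    MeasureTheory.IntegrableOn (fun t => t * max (κ t) 0) (Set.Ioi 0) ∧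
      (∫ t in Set.Ioi (0:ℝ), t * max (κ t) 0) ≤ 2 * a ^ 2 ∧
      (∫ t in Set.Ioi (0:ℝ), t * max (κ t) 0) ≤ 1 :=
  stmt_18_general a ha ha' ψ hψ ζ hζ κ hκ
end
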